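/- arXiv:2106.12176 — 9 statements merged into one kernel-verified Lean document; each statement's English description precedes it below -/
import Mathlib

section
/- Let m ∈ ℕ and let α, β, γ, μ, ν, φ, ψ ∈ ℝ. Define F(x) = αx² + βx + γ and G(x) = (α + mμ)x³ + (β + mν)x² + (γ + mφ)x + mψ. Suppose that G(z) + w·F(z) ≠ 0 for all complex numbers z, w with Im(z) > 0 and Im(w) > 0 (i.e., the bivariate polynomial G(x) + y·F(x) is real stable). Then for every real-rooted real polynomial f of degree at most m, the polynomial (αx² + βx + γ)·f(x) + (μx³ + νx² + φx + ψ)·f′(x) is real-rooted. -/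
open Polynomial

/-- A real polynomial is real-rooted if it is identically zero or
all of its complex roots are real. -/
def RealRooted (f : Polynomial ℝ) : Prop :=
  f = 0 ∨ ∀ z : ℂ, aeval z f = 0 → z.im = 0

/-!
Put `G = X F + m P`; stability of `G(x) + y F(x)` says exactly that `Im (G/F) ≥ 0` on the upper
half-plane. Suppose `T = F f + P f'` vanishes at `z` with `Im z > 0`, and let
`s = f'(z)/f(z) = ∑ 1/(z - rᵢ)`, the sum over the `n ≤ m` real roots of `f`. Then `F(z) = -P(z) s`,
so `(G/F)(z) = z - m/s`, and `Im s = -Im z ∑ |z - rᵢ|⁻²` with Cauchy–Schwarz `|s|² ≤ n ∑ |z - rᵢ|⁻²`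
give `Im (G/F)(z) ≤ 0`. Thus `Im (G/F)` has an interior minimum, and by the open mapping theorem
`G = c F` with `c` real. Then `s (z - c) = m`, which forces `n = m` and every `rᵢ = c`; but for
`f = a (X - c)^m` and `m P = (c - X) F` the polynomial `T` vanishes identically.
If instead `F(z) = 0`, the same open mapping argument applied to `-F/G` gives `F = 0`, and then
`P(z) s = 0` with `P(z) ≠ 0` leaves `f` constant.
-/

open Filter Topology ComplexConjugate

theorem AnalyticAt.eventually_eq_of_isLocalMin_im {g : ℂ → ℂ} {z₀ : ℂ}
    (hg : AnalyticAt ℂ g z₀) (hmin : IsLocalMin (fun z => (g z).im) z₀) :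
    ∀ᶠ z in 𝓝 z₀, g z = g z₀ := by
  refine hg.eventually_constant_or_nhds_le_map_nhds.resolve_right fun hopen => ?_
  have hhalf : {w : ℂ | (g z₀).im ≤ w.im} ∈ 𝓝 (g z₀) := hopen hmin
  simpa using mem_interior_iff_mem_nhds.mpr hhalf

theorem Polynomial.eq_of_eventually_aeval_eq {p q : ℝ[X]} {z₀ : ℂ}
    (h : ∀ᶠ z in 𝓝 z₀, aeval z p = aeval z q) : p = q := by
  refine map_injective (algebraMap ℝ ℂ) (algebraMap ℝ ℂ).injective
    (eq_of_infinite_eval_eq _ _ ((infinite_of_mem_nhds z₀ h).mono fun z hz => ?_))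
  simpa only [eval_map_algebraMap] using hz

theorem Complex.eventually_nhds_im_pos {z : ℂ} (hz : 0 < z.im) : ∀ᶠ w in 𝓝 z, 0 < w.im :=
  continuousAt_const.eventually_lt Complex.continuous_im.continuousAt hz

/-- `G(x) + y F(x)` is stable: it has no zero with both `x` and `y` in the open upper
half-plane. -/
def IsStablePencil (G F : ℝ[X]) : Prop :=
  ∀ z w : ℂ, 0 < z.im → 0 < w.im → aeval z G + w * aeval z F ≠ 0

namespace IsStablePencil

variable {G F : ℝ[X]} {z : ℂ}

theorem im_div_nonneg (h : IsStablePencil G F) (hz : 0 < z.im) :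
    0 ≤ (aeval z G / aeval z F).im := by
  by_contra! hneg
  have hF : aeval z F ≠ 0 := fun hF => by simp [hF] at hneg
  refine h z (-(aeval z G / aeval z F)) hz (by simpa using hneg) ?_
  field_simp
  ring

theorem im_neg_div_nonneg (h : IsStablePencil G F) (hz : 0 < z.im) :
    0 ≤ (-(aeval z F / aeval z G)).im := by
  rw [← inv_div, Complex.neg_im, Complex.inv_im, neg_div, neg_neg]
  exact div_nonneg (h.im_div_nonneg hz) (Complex.normSq_nonneg _)

theorem aeval_ne_zero_of_aeval_eq_zero (h : IsStablePencil G F) (hz : 0 < z.im)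
    (hF : aeval z F = 0) : aeval z G ≠ 0 := by
  simpa [hF] using h z Complex.I hz (by simp)

theorem eq_zero_of_aeval_eq_zero (h : IsStablePencil G F) (hz : 0 < z.im)
    (hF : aeval z F = 0) : F = 0 := by
  have hG := h.aeval_ne_zero_of_aeval_eq_zero hz hF
  set g : ℂ → ℂ := fun w => -(aeval w F / aeval w G)
  have hg : AnalyticAt ℂ g z :=
    ((analyticAt_id.aeval_polynomial F).div (analyticAt_id.aeval_polynomial G) hG).neg
  have hmin : IsLocalMin (fun w => (g w).im) z := by
    filter_upwards [Complex.eventually_nhds_im_pos hz] with w hw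
    simpa [g, hF] using h.im_neg_div_nonneg hw
  have hGne : ∀ᶠ w in 𝓝 z, aeval w G ≠ 0 :=
    (Polynomial.differentiable_aeval G).continuous.continuousAt.eventually_ne hG
  refine eq_of_eventually_aeval_eq (z₀ := z) ?_
  filter_upwards [hg.eventually_eq_of_isLocalMin_im hmin, hGne] with w hw hGw
  simpa [g, hF, hGw] using hw

theorem exists_eq_C_mul (h : IsStablePencil G F) (hz : 0 < z.im) (hF : aeval z F ≠ 0)
    (him : (aeval z G / aeval z F).im ≤ 0) : ∃ c : ℝ, G = C c * F := by
  set g : ℂ → ℂ := fun w => aeval w G / aeval w F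
  have hg : AnalyticAt ℂ g z :=
    (analyticAt_id.aeval_polynomial G).div (analyticAt_id.aeval_polynomial F) hF
  have hreal : (g z).im = 0 := le_antisymm him (h.im_div_nonneg hz)
  have hmin : IsLocalMin (fun w => (g w).im) z := by
    filter_upwards [Complex.eventually_nhds_im_pos hz] with w hw
    simpa [hreal] using h.im_div_nonneg hw
  have hFne : ∀ᶠ w in 𝓝 z, aeval w F ≠ 0 :=
    (Polynomial.differentiable_aeval F).continuous.continuousAt.eventually_ne hF
  refine ⟨(g z).re, eq_of_eventually_aeval_eq (z₀ := z) ?_⟩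
  filter_upwards [hg.eventually_eq_of_isLocalMin_im hmin, hFne] with w hw hFw
  have hc : ((g z).re : ℂ) = g z := Complex.ext rfl (by simp [hreal])
  rw [aeval_mul, aeval_C, Complex.coe_algebraMap, hc, ← hw]
  exact (div_mul_cancel₀ _ hFw).symm

end IsStablePencil

section RootSums

variable {ι : Type*} [Fintype ι] (r : ι → ℝ) {z : ℂ}

theorem Complex.normSq_sum_le_card_mul (w : ι → ℂ) :
    Complex.normSq (∑ i, w i) ≤ Fintype.card ι * ∑ i, Complex.normSq (w i) := by
  simp only [← Complex.sq_norm]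
  calc ‖∑ i, w i‖ ^ 2 ≤ (∑ i, ‖w i‖) ^ 2 := by gcongr; exact norm_sum_le _ _
    _ ≤ Fintype.card ι * ∑ i, ‖w i‖ ^ 2 := sq_sum_le_card_mul_sum_sq

theorem im_sum_inv_sub_ofReal :
    (∑ i, (z - r i)⁻¹).im = -z.im * ∑ i, (Complex.normSq (z - r i))⁻¹ := by
  simp [Complex.im_sum, Complex.inv_im, Finset.mul_sum, div_eq_mul_inv]

theorem normSq_sub_ofReal_pos (hz : z.im ≠ 0) (x : ℝ) : 0 < Complex.normSq (z - x) :=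
  Complex.normSq_pos.mpr fun h => hz (by simpa using congrArg Complex.im h)

theorem sum_inv_sub_ofReal_ne_zero [Nonempty ι] (hz : z.im ≠ 0) : ∑ i, (z - r i)⁻¹ ≠ 0 := by
  intro h
  have hQ : 0 < ∑ i, (Complex.normSq (z - r i))⁻¹ :=
    Finset.sum_pos (fun i _ => inv_pos.mpr (normSq_sub_ofReal_pos hz _)) Finset.univ_nonempty
  have := im_sum_inv_sub_ofReal r (z := z)
  rw [h, Complex.zero_im] at this
  exact hz (by nlinarith [mul_pos hQ hQ])

theorem im_sub_div_sum_inv_sub_ofReal_nonpos (hz : 0 < z.im) {m : ℕ}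
    (hm : Fintype.card ι ≤ m) (hs : ∑ i, (z - r i)⁻¹ ≠ 0) :
    (z - m / ∑ i, (z - r i)⁻¹).im ≤ 0 := by
  set s := ∑ i, (z - r i)⁻¹
  set Q := ∑ i, (Complex.normSq (z - r i))⁻¹
  have hcs : Complex.normSq s ≤ m * Q := by
    calc Complex.normSq s ≤ Fintype.card ι * ∑ i, Complex.normSq (z - r i)⁻¹ :=
          Complex.normSq_sum_le_card_mul _
      _ ≤ m * Q := by
          simp only [map_inv₀, Q]
          gcongr
          · exact Finset.sum_nonneg fun i _ => inv_nonneg.mpr (Complex.normSq_nonneg _)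
  have hpos : 0 < Complex.normSq s := Complex.normSq_pos.mpr hs
  rw [Complex.sub_im, div_eq_mul_inv, ← Complex.ofReal_natCast, Complex.im_ofReal_mul,
    Complex.inv_im, im_sum_inv_sub_ofReal, sub_nonpos, neg_mul, neg_neg, ← mul_div_assoc,
    le_div_iff₀ hpos]
  nlinarith

theorem card_eq_and_eq_of_sum_inv_sub_ofReal_mul_eq (hz : z.im ≠ 0) {m : ℕ} {c : ℝ}
    (hm : Fintype.card ι ≤ m) (h : (∑ i, (z - r i)⁻¹) * (z - c) = m) :
    Fintype.card ι = m ∧ ∀ i, r i = c := by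
  set N : ι → ℝ := fun i => Complex.normSq (z - r i)
  have hN : ∀ i, 0 < N i := fun i => normSq_sub_ofReal_pos hz (r i)
  have hsum : ∑ i, ((r i - c : ℝ) : ℂ) * (z - r i)⁻¹ = m - Fintype.card ι := by
    have hterm : ∀ i, (z - r i)⁻¹ * (z - c) = 1 + ((r i - c : ℝ) : ℂ) * (z - r i)⁻¹ := by
      intro i
      have : z - r i ≠ 0 := Complex.normSq_pos.mp (hN i)
      field_simp
      push_cast
      ring
    rw [Finset.sum_mul, Finset.sum_congr rfl fun i _ => hterm i, Finset.sum_add_distrib] at h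
    simp only [Finset.sum_const, Finset.card_univ, nsmul_eq_mul, mul_one] at h
    linear_combination h
  have him : ∑ i, (r i - c) / N i = 0 := by
    have := congrArg Complex.im hsum
    simp only [Complex.im_sum, Complex.im_ofReal_mul, Complex.inv_im, Complex.sub_im,
      Complex.ofReal_im, sub_zero, Complex.natCast_im] at this
    have h' : -z.im * ∑ i, (r i - c) / N i = 0 := by
      rw [Finset.mul_sum, ← this]
      exact Finset.sum_congr rfl fun i _ => by simp only [N]; ring
    simpa [hz] using h'
  have hre : ∑ i, (r i - c) * (z.re - r i) / N i = m - Fintype.card ι := by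
    have := congrArg Complex.re hsum
    simp only [Complex.re_sum, Complex.re_ofReal_mul, Complex.inv_re, Complex.sub_re,
      Complex.ofReal_re, Complex.natCast_re] at this
    rw [← this]
    exact Finset.sum_congr rfl fun i _ => by simp only [N]; ring
  have hD : ∑ i, (r i - c) ^ 2 / N i = Fintype.card ι - m := by
    have : ∀ i, (r i - c) ^ 2 / N i =
        (z.re - c) * ((r i - c) / N i) - (r i - c) * (z.re - r i) / N i := fun i => by ring
    rw [Finset.sum_congr rfl fun i _ => this i, Finset.sum_sub_distrib, ← Finset.mul_sum, him, hre]
    ring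
  have hterms : ∀ i ∈ Finset.univ, 0 ≤ (r i - c) ^ 2 / N i :=
    fun i _ => div_nonneg (sq_nonneg _) (hN i).le
  have hcard : (Fintype.card ι : ℝ) = m :=
    le_antisymm (by exact_mod_cast hm) (by linarith [Finset.sum_nonneg hterms])
  refine ⟨by exact_mod_cast hcard, fun i => ?_⟩
  have hzero := (Finset.sum_eq_zero_iff_of_nonneg hterms).mp (by rw [hD, hcard, sub_self]) i
    (Finset.mem_univ i)
  rw [div_eq_zero_iff, or_iff_left (hN i).ne', sq_eq_zero_iff, sub_eq_zero] at hzero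
  exact hzero

end RootSums

theorem realRooted_of_forall_im_pos {f : ℝ[X]}
    (h : ∀ z : ℂ, 0 < z.im → aeval z f = 0 → f = 0) : RealRooted f := by
  by_cases hf : f = 0
  · exact Or.inl hf
  refine Or.inr fun z hz => ?_
  by_contra hne
  rcases lt_or_gt_of_ne hne with hneg | hpos
  · exact hf (h (conj z) (by simpa using hneg) (by rw [aeval_conj, hz, map_zero]))
  · exact hf (h z hpos hz)

theorem RealRooted.splits {f : ℝ[X]} (hf : RealRooted f) : f.Splits := by
  refine (IsAlgClosed.splits _).of_splits_map (algebraMap ℝ ℂ) fun z hz => ?_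
  have hf0 : f ≠ 0 := by rintro rfl; simp at hz
  have hroot : aeval z f = 0 := by
    rw [aeval_def, ← eval_map]
    exact (mem_roots'.mp hz).2
  exact ⟨z.re, Complex.ext rfl (by simp [(hf.resolve_left hf0) z hroot])⟩

theorem Polynomial.Splits.aeval_derivative_eq_mul_sum {f : ℝ[X]} (hf : f.Splits) {z : ℂ}
    (hz : aeval z f ≠ 0) :
    aeval z (derivative f) = aeval z f * ∑ x : f.roots, (z - (x : ℝ))⁻¹ := by
  have hsum : ∑ x : f.roots, (z - (x : ℝ))⁻¹ = (f.roots.map fun r : ℝ => (z - r)⁻¹).sum :=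
    congrArg Multiset.sum (Multiset.map_univ f.roots fun r : ℝ => (z - (r : ℂ))⁻¹)
  rw [aeval_def, ← eval_map] at hz ⊢
  rw [aeval_def, ← eval_map, ← derivative_map, hsum,
    (hf.map _).eval_derivative_eq_eval_mul_sum hz, hf.roots_map, Multiset.map_map]
  simp

theorem Polynomial.X_sub_C_mul_derivative_X_sub_C_pow {R : Type*} [CommRing R] (c : R) (n : ℕ) :
    (X - C c) * derivative ((X - C c) ^ n) = C (n : R) * (X - C c) ^ n := by
  rcases n with _ | n
  · simp
  · rw [derivative_X_sub_C_pow, pow_succ]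
    simp only [add_tsub_cancel_right]
    ring

theorem Polynomial.C_mul_mul_add_mul_derivative_eq_zero {R : Type*} [CommRing R]
    {F P : R[X]} {m : ℕ} {a c : R} (hFP : C (m : R) * P = (C c - X) * F) :
    C (m : R) * (F * (C a * (X - C c) ^ m) + P * derivative (C a * (X - C c) ^ m)) = 0 := by
  have hder := X_sub_C_mul_derivative_X_sub_C_pow c m
  rw [derivative_C_mul]
  linear_combination (C a * derivative ((X - C c) ^ m)) * hFP - (C a * F) * hder

namespace IsStablePencil

variable {F P f : ℝ[X]} {m : ℕ} {z : ℂ}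

theorem mul_add_mul_derivative_eq_zero_of_aeval_eq_zero
    (hstable : IsStablePencil (X * F + C (m : ℝ) * P) F) (hsplit : f.Splits) (hz : 0 < z.im)
    (hFPs : aeval z F + aeval z P * ∑ x : f.roots, (z - (x : ℝ))⁻¹ = 0)
    (hFz : aeval z F = 0) : F * f + P * derivative f = 0 := by
  have hPz : aeval z P ≠ 0 := fun hP => by
    simpa [hFz, hP] using hstable.aeval_ne_zero_of_aeval_eq_zero hz hFz
  have hs : ∑ x : f.roots, (z - (x : ℝ))⁻¹ = 0 := by simpa [hFz, hPz] using hFPs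
  have hroots : IsEmpty f.roots := by
    by_contra hne
    rw [not_isEmpty_iff] at hne
    exact sum_inv_sub_ofReal_ne_zero _ hz.ne' hs
  have hdeg0 : f.natDegree = 0 := by
    rw [hsplit.natDegree_eq_card_roots, ← Multiset.card_coe, Fintype.card_eq_zero]
  rw [hstable.eq_zero_of_aeval_eq_zero hz hFz, eq_C_of_natDegree_eq_zero hdeg0]
  simp

theorem mul_add_mul_derivative_eq_zero_of_aeval_ne_zero
    (hstable : IsStablePencil (X * F + C (m : ℝ) * P) F) (hsplit : f.Splits)
    (hdeg : f.natDegree ≤ m) (hz : 0 < z.im)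
    (hFPs : aeval z F + aeval z P * ∑ x : f.roots, (z - (x : ℝ))⁻¹ = 0)
    (hFz : aeval z F ≠ 0) : F * f + P * derivative f = 0 := by
  set s := ∑ x : f.roots, (z - (x : ℝ))⁻¹
  have hs : s ≠ 0 := fun hs => hFz (by simpa [hs] using hFPs)
  have hPz : aeval z P ≠ 0 := fun hP => hFz (by simpa [hP] using hFPs)
  have hF : aeval z F = -(aeval z P * s) := by linear_combination hFPs
  have hGz : aeval z (X * F + C (m : ℝ) * P) = z * aeval z F + m * aeval z P := by simp
  have hcard : Fintype.card f.roots ≤ m := by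
    rwa [Multiset.card_coe, ← hsplit.natDegree_eq_card_roots]
  have hGF : aeval z (X * F + C (m : ℝ) * P) / aeval z F = z - m / s := by
    rw [hGz, hF]
    field_simp
    ring
  obtain ⟨c, hc⟩ := hstable.exists_eq_C_mul hz hFz <| by
    rw [hGF]
    exact im_sub_div_sum_inv_sub_ofReal_nonpos (fun x : f.roots => (x : ℝ)) hz hcard hs
  have hsc : s * (z - c) = m := by
    have := congrArg (aeval z) hc
    rw [hGz, aeval_mul, aeval_C, Complex.coe_algebraMap, hF] at this
    apply mul_left_cancel₀ hPz
    linear_combination -this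
  obtain ⟨hcardm, hrootc⟩ := card_eq_and_eq_of_sum_inv_sub_ofReal_mul_eq _ hz.ne' hcard hsc
  have hfc : f = C f.leadingCoeff * (X - C c) ^ m := by
    rw [hsplit.eq_prod_roots, (Multiset.eq_replicate (s := f.roots)).mpr
      ⟨(Multiset.card_coe _).symm.trans hcardm, fun b hb =>
        (Multiset.forall_coe _).mp hrootc b ⟨0, Multiset.count_pos.mpr hb⟩⟩]
    simp
  have hm : (m : ℂ) ≠ 0 := by
    rw [← hsc]
    exact mul_ne_zero hs (sub_ne_zero.mpr fun h => hz.ne' (by simpa using congrArg Complex.im h))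
  have hmT := C_mul_mul_add_mul_derivative_eq_zero (a := f.leadingCoeff)
    (show C (m : ℝ) * P = (C c - X) * F by linear_combination hc)
  rw [← hfc] at hmT
  exact (mul_eq_zero.mp hmT).resolve_left (C_ne_zero.mpr (by exact_mod_cast hm))

end IsStablePencil

theorem realRooted_mul_add_mul_derivative {F P : ℝ[X]} {m : ℕ}
    (hstable : IsStablePencil (X * F + C (m : ℝ) * P) F) {f : ℝ[X]} (hdeg : f.natDegree ≤ m)
    (hf : RealRooted f) : RealRooted (F * f + P * derivative f) := by
  refine realRooted_of_forall_im_pos fun z hz hTz => ?_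
  by_cases hf0 : f = 0
  · simp [hf0]
  have hsplit := hf.splits
  have hfz : aeval z f ≠ 0 := fun h => hz.ne' (hf.resolve_left hf0 z h)
  have hFPs : aeval z F + aeval z P * ∑ x : f.roots, (z - (x : ℝ))⁻¹ = 0 := by
    refine (mul_eq_zero.mp ?_).resolve_left hfz
    rw [← hTz, aeval_add, aeval_mul, aeval_mul, hsplit.aeval_derivative_eq_mul_sum hfz]
    ring
  by_cases hFz : aeval z F = 0
  · exact hstable.mul_add_mul_derivative_eq_zero_of_aeval_eq_zero hsplit hz hFPs hFz
  · exact hstable.mul_add_mul_derivative_eq_zero_of_aeval_ne_zero hsplit hdeg hz hFPs hFz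

theorem stmt_0 (m : ℕ) (α β γ μ ν φ ψ : ℝ)
    (hstable : ∀ z w : ℂ, 0 < z.im → 0 < w.im →
      (((α : ℂ) + m * μ) * z ^ 3 + ((β : ℂ) + m * ν) * z ^ 2
          + ((γ : ℂ) + m * φ) * z + m * ψ)
        + w * ((α : ℂ) * z ^ 2 + β * z + γ) ≠ 0)
    (f : Polynomial ℝ) (hdeg : f.natDegree ≤ m) (hf : RealRooted f) :
    RealRooted ((C α * X ^ 2 + C β * X + C γ) * f
      + (C μ * X ^ 3 + C ν * X ^ 2 + C φ * X + C ψ) * derivative f) := by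
  refine realRooted_mul_add_mul_derivative (fun z w hz hw => ?_) hdeg hf
  convert hstable z w hz hw using 1
  simp
  ring
end

section
/- Let α, β, γ, μ, φ : ℕ → ℝ be real sequences and let (T_n) be a sequence of real polynomials satisfying T_{n+1}(x) = (α_n x² + β_n x + γ_n)T_n(x) + (μ_n x³ + φ_n x)T_n′(x) for all n. For each n set m_n = deg T_n. Fix n₀ ∈ ℕ and suppose that for every n ≥ n₀ we have β_n ≥ 0, γ_n ≥ 0, φ_n ≥ 0 and α_n ≥ −m_nμ_n ≥ 0. If T_{n₀} is Hurwitz stable, then T_n is Hurwitz stable for all n ≥ n₀. -/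
open Polynomial

/-- A real polynomial is Hurwitz stable if it is identically zero or it does not
vanish on the open right half-plane. -/
def HurwitzStable (f : Polynomial ℝ) : Prop :=
  f = 0 ∨ ∀ z : ℂ, 0 < z.re → aeval z f ≠ 0

/-!
For `Re z > 0` and a Hurwitz stable `T ≠ 0` of degree `m`, write `L = T'/T = ∑ 1 / (z - r)` over the
roots `r` of `T`, all of which satisfy `Re r ≤ 0`. Each term has nonnegative real part and
`Re (z² / (z - r)) ≤ Re z`, so for the next polynomial `Q` of the recurrence the quotient
`Q(z) / (z T(z)) = α z + β + γ / z + (μ z² + φ) L` has nonnegative real part on the right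
half-plane; the hypothesis `α ≥ -m μ ≥ 0` is exactly what absorbs the `μ z² L` term.
A zero of `Q` there is then an interior minimum of the real part of a holomorphic function,
so by the open mapping theorem `Q` vanishes near it, hence `Q = 0`.
-/

open Complex Filter Topology
open scoped ComplexConjugate

namespace Complex

theorem re_multiset_sum (s : Multiset ℂ) : s.sum.re = (s.map re).sum := by
  simpa using map_multiset_sum reAddGroupHom s

theorem re_inv_sub_nonneg {z r : ℂ} (hz : 0 ≤ z.re) (hr : r.re ≤ 0) : 0 ≤ (z - r)⁻¹.re := by
  rw [inv_re, sub_re]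
  exact div_nonneg (by linarith) (normSq_nonneg _)

theorem re_sq_mul_inv_sub_le {z r : ℂ} (hz : 0 ≤ z.re) (hr : r.re ≤ 0) :
    (z ^ 2 * (z - r)⁻¹).re ≤ z.re := by
  rcases eq_or_ne z r with rfl | hzr
  · simpa using hz
  -- `z² / (z - r) = z + r z / (z - r)`, and `Re (r z conj (z - r)) = Re r ‖z‖² - Re z ‖r‖² ≤ 0`.
  have hsplit : z ^ 2 * (z - r)⁻¹ = z + r * z * (z - r)⁻¹ := by
    field_simp [sub_ne_zero.mpr hzr]; ring
  have hnum : (r * z * conj (z - r)).re = r.re * normSq z - z.re * normSq r := by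
    simp only [mul_re, mul_im, conj_re, conj_im, sub_re, sub_im, normSq_apply]; ring
  have hrest : (r * z * (z - r)⁻¹).re ≤ 0 := by
    rw [inv_def, ← mul_assoc, re_mul_ofReal, hnum]
    exact mul_nonpos_of_nonpos_of_nonneg
      (by nlinarith [normSq_nonneg z, normSq_nonneg r]) (inv_nonneg.mpr (normSq_nonneg _))
  rw [hsplit, add_re]
  linarith

end Complex

theorem AnalyticAt.eventually_eq_of_isLocalMin_re {E : Type*} [NormedAddCommGroup E]
    [NormedSpace ℂ E] {f : E → ℂ} {z₀ : E} (hf : AnalyticAt ℂ f z₀)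
    (hmin : IsLocalMin (fun z => (f z).re) z₀) : ∀ᶠ z in 𝓝 z₀, f z = f z₀ := by
  refine hf.eventually_constant_or_nhds_le_map_nhds.resolve_right fun hopen => ?_
  have hre : ∀ᶠ w in 𝓝 (f z₀), (f z₀).re ≤ w.re := hopen hmin
  have hleft : Tendsto (fun t : ℝ => f z₀ - t) (𝓝[>] 0) (𝓝 (f z₀)) :=
    ((continuous_const.sub continuous_ofReal).tendsto' 0 (f z₀) (by simp)).mono_left
      nhdsWithin_le_nhds
  obtain ⟨t, hle, hpos⟩ := ((hleft.eventually hre).and self_mem_nhdsWithin).exists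
  simp only [sub_re, ofReal_re] at hle
  linarith [show (0 : ℝ) < t from hpos]

namespace Polynomial

variable {P : ℂ[X]} {z : ℂ}

theorem re_eval_derivative_div_eval_nonneg (hroots : ∀ r ∈ P.roots, r.re ≤ 0) (hz : 0 ≤ z.re)
    (hPz : P.eval z ≠ 0) : 0 ≤ (P.derivative.eval z / P.eval z).re := by
  rw [(IsAlgClosed.splits P).eval_derivative_div_eval_of_ne_zero hPz, re_multiset_sum,
    Multiset.map_map]
  exact Multiset.sum_nonneg fun _ h => by
    obtain ⟨r, hr, rfl⟩ := Multiset.mem_map.mp h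
    simpa using re_inv_sub_nonneg hz (hroots r hr)

theorem re_sq_mul_eval_derivative_div_eval_le (hroots : ∀ r ∈ P.roots, r.re ≤ 0)
    (hz : 0 ≤ z.re) (hPz : P.eval z ≠ 0) :
    (z ^ 2 * (P.derivative.eval z / P.eval z)).re ≤ P.natDegree * z.re := by
  rw [(IsAlgClosed.splits P).eval_derivative_div_eval_of_ne_zero hPz,
    (IsAlgClosed.splits P).natDegree_eq_card_roots, ← Multiset.sum_map_mul_left,
    re_multiset_sum, Multiset.map_map]
  calc _ ≤ (P.roots.map fun _ => z.re).sum :=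
        Multiset.sum_map_le_sum_map _ _ fun r hr => by
          simpa using re_sq_mul_inv_sub_le hz (hroots r hr)
    _ = _ := by simp

theorem re_div_nonneg_of_roots_re_nonpos {a b c u v : ℝ} (hb : 0 ≤ b) (hc : 0 ≤ c) (hv : 0 ≤ v)
    (hau : -((P.natDegree : ℝ) * u) ≤ a) (hu : 0 ≤ -((P.natDegree : ℝ) * u))
    (hroots : ∀ r ∈ P.roots, r.re ≤ 0) (hz : 0 < z.re) (hPz : P.eval z ≠ 0) :
    0 ≤ (((a * z ^ 2 + b * z + c) * P.eval z + (u * z ^ 3 + v * z) * P.derivative.eval z)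
      / (z * P.eval z)).re := by
  set L := P.derivative.eval z / P.eval z
  have hz0 : z ≠ 0 := by rintro rfl; simp at hz
  have hexpand : ((a * z ^ 2 + b * z + c) * P.eval z + (u * z ^ 3 + v * z) * P.derivative.eval z)
      / (z * P.eval z) = a * z + b + c * z⁻¹ + u * (z ^ 2 * L) + v * L := by
    simp only [L]; field_simp; ring
  have hinv : 0 ≤ z⁻¹.re := by rw [inv_re]; exact div_nonneg hz.le (normSq_nonneg z)
  have hL : 0 ≤ L.re := re_eval_derivative_div_eval_nonneg hroots hz.le hPz
  have hu_term : P.natDegree * u * z.re ≤ u * (z ^ 2 * L).re := by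
    rcases le_or_gt u 0 with hu0 | hu0
    · nlinarith [re_sq_mul_eval_derivative_div_eval_le hroots hz.le hPz]
    · have hm : P.natDegree = 0 := by
        by_contra hm
        have : (0 : ℝ) < P.natDegree := by positivity
        nlinarith
      simp [L, derivative_of_natDegree_zero hm, hm]
  rw [hexpand]
  simp only [add_re, re_ofReal_mul, ofReal_re]
  nlinarith [mul_nonneg (by linarith : 0 ≤ a + P.natDegree * u) hz.le, mul_nonneg hc hinv,
    mul_nonneg hv hL]

theorem eq_zero_of_eventually_aeval_eq_zero {p : ℝ[X]} {z₀ : ℂ}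
    (h : ∀ᶠ z in 𝓝 z₀, aeval z p = 0) : p = 0 := by
  have hzero := (analyticOnNhd_id (𝕜 := ℂ).aeval_polynomial p)
    |>.eqOn_zero_of_preconnected_of_eventuallyEq_zero isPreconnected_univ (Set.mem_univ z₀) h
  refine Polynomial.funext fun x => ?_
  have hx : aeval (algebraMap ℝ ℂ x) p = 0 := hzero (Set.mem_univ _)
  rw [aeval_algebraMap_apply_eq_algebraMap_eval] at hx
  simpa using hx

end Polynomial

theorem HurwitzStable.of_re_div_nonneg {T Q : ℝ[X]} (hT : ∀ z : ℂ, 0 < z.re → aeval z T ≠ 0)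
    (hQ : ∀ z : ℂ, 0 < z.re → 0 ≤ (aeval z Q / (z * aeval z T)).re) : HurwitzStable Q := by
  refine or_iff_not_imp_right.mpr fun hroot => ?_
  push Not at hroot
  obtain ⟨z₀, hz₀, hQz₀⟩ := hroot
  set F : ℂ → ℂ := fun z => aeval z Q / (z * aeval z T)
  have hhalf : ∀ᶠ z in 𝓝 z₀, 0 < z.re := continuous_re.continuousAt.eventually (lt_mem_nhds hz₀)
  have hden : ∀ z : ℂ, 0 < z.re → z * aeval z T ≠ 0 := fun z hz =>
    mul_ne_zero (by rintro rfl; simp at hz) (hT z hz)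
  have hF : AnalyticAt ℂ F z₀ := (analyticAt_id.aeval_polynomial Q).div
    (analyticAt_id.mul (analyticAt_id.aeval_polynomial T)) (hden z₀ hz₀)
  have hmin : IsLocalMin (fun z => (F z).re) z₀ := by
    filter_upwards [hhalf] with z hz
    simpa [F, hQz₀] using hQ z hz
  have hQ0 : ∀ᶠ z in 𝓝 z₀, aeval z Q = 0 := by
    filter_upwards [hF.eventually_eq_of_isLocalMin_re hmin, hhalf] with z hFz hz
    simpa [F, hQz₀, hden z hz] using hFz
  exact eq_zero_of_eventually_aeval_eq_zero hQ0

theorem HurwitzStable.recurrence_step {a b c u v : ℝ} {T : ℝ[X]} (hb : 0 ≤ b) (hc : 0 ≤ c)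
    (hv : 0 ≤ v) (hau : -((T.natDegree : ℝ) * u) ≤ a) (hu : 0 ≤ -((T.natDegree : ℝ) * u))
    (hT : HurwitzStable T) :
    HurwitzStable ((C a * X ^ 2 + C b * X + C c) * T + (C u * X ^ 3 + C v * X) * derivative T) := by
  rcases hT with rfl | hT
  · left; simp
  obtain ⟨P, hP⟩ : ∃ P : ℂ[X], P = T.map (algebraMap ℝ ℂ) := ⟨_, rfl⟩
  have haeval : ∀ z, aeval z T = P.eval z := fun z => by rw [hP, eval_map_algebraMap]
  have haeval_derivative : ∀ z, aeval z (derivative T) = P.derivative.eval z := fun z => by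
    rw [hP, derivative_map, eval_map_algebraMap]
  have hdeg : P.natDegree = T.natDegree := by rw [hP, natDegree_map]
  have hroots : ∀ r ∈ P.roots, r.re ≤ 0 := fun r hr => not_lt.mp fun hpos =>
    hT r hpos (by rw [haeval]; exact isRoot_of_mem_roots hr)
  refine of_re_div_nonneg hT fun z hz => ?_
  have := re_div_nonneg_of_roots_re_nonpos (a := a) (u := u) hb hc hv (by rwa [hdeg])
    (by rwa [hdeg]) hroots hz (by rw [← haeval]; exact hT z hz)
  simpa [haeval, haeval_derivative] using this

theorem stmt_3 (α β γ μ φ : ℕ → ℝ) (T : ℕ → Polynomial ℝ)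
    (hrec : ∀ n, T (n + 1) =
      (C (α n) * X ^ 2 + C (β n) * X + C (γ n)) * T n
        + (C (μ n) * X ^ 3 + C (φ n) * X) * derivative (T n))
    (n₀ : ℕ)
    (hβ : ∀ n, n₀ ≤ n → 0 ≤ β n)
    (hγ : ∀ n, n₀ ≤ n → 0 ≤ γ n)
    (hφ : ∀ n, n₀ ≤ n → 0 ≤ φ n)
    (hαμ : ∀ n, n₀ ≤ n → -(((T n).natDegree : ℝ) * μ n) ≤ α n)
    (hμ : ∀ n, n₀ ≤ n → 0 ≤ -(((T n).natDegree : ℝ) * μ n))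
    (hT0 : HurwitzStable (T n₀)) :
    ∀ n, n₀ ≤ n → HurwitzStable (T n) := by
  intro n hn
  induction n, hn using Nat.le_induction with
  | base => exact hT0
  | succ n hn ih =>
    rw [hrec n]
    exact ih.recurrence_step (hβ n hn) (hγ n hn) (hφ n hn) (hαμ n hn) (hμ n hn)
end

section
/- Let (ℛ_n) be the sequence of real polynomials defined by ℛ_0(x) = 1 and ℛ_{n+1}(x) = (2nx + 1)·x·ℛ_n(x) + x(1 − x²)·ℛ_n′(x) for n ≥ 0. Then ℛ_n is Hurwitz stable for every n ∈ ℕ. (This resolves the conjecture of Ma–Wang on the alternating runs polynomials of the dual set of Stirling permutations.) -/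
open Polynomial

/-!
If `F` has all its roots `r` in the closed left half-plane and `m ≤ a` roots in total, then at a
point `z` of the open right half-plane `F'(z) / F(z) = ∑ 1 / (z - r)`, so
`(a z + 1) z F(z) + z (1 - z²) F'(z) = z F(z) ((a - m) z + 1 + ∑ (1 - z r) / (z - r))`,
and each `(1 - z r) / (z - r)` has nonnegative real part. Hence the right-hand side does not
vanish. Since `deg ℛ_n ≤ 2n`, induction on `n` gives the theorem.
-/

noncomputable def runsStep {K : Type*} [CommRing K] (a : K) (p : K[X]) : K[X] :=
  (C a * X + 1) * X * p + X * (1 - X ^ 2) * derivative p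

lemma map_runsStep {K L : Type*} [CommRing K] [CommRing L] (f : K →+* L) (a : K) (p : K[X]) :
    (runsStep a p).map f = runsStep (f a) (p.map f) := by
  simp [runsStep, derivative_map]

lemma natDegree_runsStep_le (a : ℝ) (p : ℝ[X]) :
    (runsStep a p).natDegree ≤ p.natDegree + 2 := by
  refine (natDegree_add_le _ _).trans (max_le ?_ ?_)
  · have : ((C a * X + 1) * X).natDegree ≤ 2 := by compute_degree
    exact natDegree_mul_le.trans (by omega)
  · rcases eq_or_ne p.natDegree 0 with hp | hp
    · simp [derivative_of_natDegree_zero hp]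
    · have : (X * (1 - X ^ 2) : ℝ[X]).natDegree ≤ 3 := by compute_degree
      have := natDegree_derivative_le p
      exact natDegree_mul_le.trans (by omega)

lemma re_one_sub_mul_div_sub_nonneg {z r : ℂ} (hz : 0 < z.re) (hr : r.re ≤ 0) :
    0 ≤ ((1 - z * r) / (z - r)).re := by
  rw [Complex.div_re, ← add_div]
  apply div_nonneg _ (Complex.normSq_nonneg _)
  have hnum : (1 - z * r).re * (z - r).re + (1 - z * r).im * (z - r).im
      = z.re * (1 + r.re ^ 2 + r.im ^ 2) - r.re * (1 + z.re ^ 2 + z.im ^ 2) := by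
    simp only [Complex.sub_re, Complex.sub_im, Complex.one_re, Complex.one_im, Complex.mul_re,
      Complex.mul_im]
    ring
  rw [hnum]
  nlinarith [mul_nonneg hz.le (by positivity : (0 : ℝ) ≤ 1 + r.re ^ 2 + r.im ^ 2),
    mul_nonneg (neg_nonneg.mpr hr) (by positivity : (0 : ℝ) ≤ 1 + z.re ^ 2 + z.im ^ 2)]

lemma neg_re_le_re_one_sub_sq_div_sub {z r : ℂ} (hz : 0 < z.re) (hr : r.re ≤ 0) :
    -z.re ≤ ((1 - z ^ 2) / (z - r)).re := by
  have hzr : z - r ≠ 0 := fun h => by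
    have := congrArg Complex.re h
    simp only [Complex.sub_re, Complex.zero_re] at this
    linarith
  have hsplit : (1 - z ^ 2) / (z - r) = (1 - z * r) / (z - r) - z := by
    field_simp
    ring
  rw [hsplit, Complex.sub_re]
  linarith [re_one_sub_mul_div_sub_nonneg hz hr]

theorem eval_runsStep_ne_zero {F : ℂ[X]} {a : ℝ} (ha : (F.natDegree : ℝ) ≤ a)
    (hF : ∀ w : ℂ, 0 < w.re → F.eval w ≠ 0) {z : ℂ} (hz : 0 < z.re) :
    (runsStep (a : ℂ) F).eval z ≠ 0 := by
  have hFz := hF z hz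
  have hz0 : z ≠ 0 := fun h => by simp [h] at hz
  have hroots_re : ∀ r ∈ F.roots, r.re ≤ 0 := fun r hr => by
    by_contra! h
    exact hF r h (mem_roots'.mp hr).2
  set S := (F.roots.map fun r => 1 / (z - r)).sum
  have hlog : F.derivative.eval z = F.eval z * S :=
    (IsAlgClosed.splits F).eval_derivative_eq_eval_mul_sum hFz
  have hS : -(Multiset.card F.roots * z.re) ≤ ((1 - z ^ 2) * S).re :=
    calc -(Multiset.card F.roots * z.re) = (F.roots.map fun _ => -z.re).sum := by simp
      _ ≤ (F.roots.map fun r => ((1 - z ^ 2) / (z - r)).re).sum :=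
        Multiset.sum_map_le_sum_map _ _
          (fun r hr => neg_re_le_re_one_sub_sq_div_sub hz (hroots_re r hr))
      _ = ((F.roots.map fun r => (1 - z ^ 2) / (z - r)).sum).re := by
        rw [← Complex.coe_reAddGroupHom, map_multiset_sum, Multiset.map_map]
        rfl
      _ = ((1 - z ^ 2) * S).re := by
        rw [← Multiset.sum_map_mul_left]
        simp only [mul_one_div]
  have hcard : (Multiset.card F.roots : ℝ) ≤ a := le_trans (by exact_mod_cast card_roots' F) ha
  have hfactor_re : 0 < ((a * z + 1) + (1 - z ^ 2) * S).re := by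
    rw [Complex.add_re, Complex.add_re, Complex.re_ofReal_mul, Complex.one_re]
    linarith [mul_nonneg (sub_nonneg.mpr hcard) hz.le]
  have hfactor :
      (runsStep (a : ℂ) F).eval z = F.eval z * z * ((a * z + 1) + (1 - z ^ 2) * S) := by
    simp only [runsStep, eval_add, eval_mul, eval_sub, eval_pow, eval_C, eval_X, eval_one, hlog]
    ring
  rw [hfactor]
  exact mul_ne_zero (mul_ne_zero hFz hz0) fun h => by simp [h] at hfactor_re

theorem HurwitzStable.runsStep {p : ℝ[X]} (hp : HurwitzStable p) {a : ℝ}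
    (ha : (p.natDegree : ℝ) ≤ a) : HurwitzStable (runsStep a p) := by
  rcases hp with rfl | hp
  · left
    simp [_root_.runsStep]
  right
  intro z hz
  have hF : ∀ w : ℂ, 0 < w.re → (p.map (algebraMap ℝ ℂ)).eval w ≠ 0 :=
    fun w hw => (eval_map_algebraMap p w).trans_ne (hp w hw)
  have hdeg : ((p.map (algebraMap ℝ ℂ)).natDegree : ℝ) ≤ a := by rwa [natDegree_map]
  rw [← eval_map_algebraMap, map_runsStep]
  exact eval_runsStep_ne_zero hdeg hF hz

theorem stmt_4 (R : ℕ → Polynomial ℝ)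
    (hR0 : R 0 = 1)
    (hrec : ∀ n : ℕ, R (n + 1) =
      (C (2 * (n : ℝ)) * X + 1) * X * R n + X * (1 - X ^ 2) * derivative (R n)) :
    ∀ n : ℕ, HurwitzStable (R n) := by
  have hdeg : ∀ n, (R n).natDegree ≤ 2 * n := by
    intro n
    induction n with
    | zero => simp [hR0]
    | succ n ih => rw [hrec]; exact (natDegree_runsStep_le _ _).trans (by omega)
  intro n
  induction n with
  | zero => rw [hR0]; exact .inr fun z _ => by simp
  | succ n ih => rw [hrec]; exact ih.runsStep (by exact_mod_cast hdeg n)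
end

section
/- Let n ∈ ℕ, let ν ∈ {0, 1}, let g₀, g₁, …, g_n ∈ ℝ, and define the real polynomials g(x) = Σ_{k=0}^{n} g_k x^k and f(x) = (1 + x)^ν · Σ_{k=0}^{n} g_k x^k (1 + x²)^{n−k}. Then f is Hurwitz stable if and only if g is Hurwitz stable. In particular, if f is Hurwitz stable and its leading coefficient is positive, then g_k ≥ 0 for all 0 ≤ k ≤ n (i.e., f is semi-γ-positive). -/
open Polynomial

/-!
The substitution `w = z / (1 + z²) = (z + z⁻¹)⁻¹` maps the open right half-plane onto itself,
and on it `(1 + z)^ν ∑ gₖ zᵏ (1 + z²)^(n-k) = (1 + z)^ν (1 + z²)ⁿ g(w)` with nonvanishing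
prefactors. So `f` and `g` vanish at the same points of the half-plane, and both stability
conditions are dichotomies "vanishes everywhere there (i.e. is zero) or nowhere there".

A nonzero Hurwitz stable real polynomial is its leading coefficient times a product of factors
`X + a` and `X² + bX + c` with `a, b, c ≥ 0`, so its coefficients and its values on `(0, ∞)` have
the sign of its leading coefficient. As `f(1) = 2^ν 2ⁿ g(1/2)` and `f` has positive leading
coefficient, so does `g`, whence `gₖ ≥ 0`.
-/

namespace Polynomial

theorem coeff_mul_nonneg {R : Type*} [Semiring R] [PartialOrder R] [IsOrderedRing R]
    {p q : R[X]} (hp : ∀ i, 0 ≤ p.coeff i) (hq : ∀ i, 0 ≤ q.coeff i) (i : ℕ) :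
    0 ≤ (p * q).coeff i := by
  rw [coeff_mul]
  exact Finset.sum_nonneg fun _ _ ↦ mul_nonneg (hp _) (hq _)

theorem exists_monic_dvd_coeff_nonneg {p : ℝ[X]} (hp : 0 < p.degree)
    (hroots : ∀ z : ℂ, 0 < z.re → aeval z p ≠ 0) :
    ∃ d : ℝ[X], d.Monic ∧ 0 < d.natDegree ∧ (∀ i, 0 ≤ d.coeff i) ∧ d ∣ p := by
  obtain ⟨z, hz⟩ := IsAlgClosed.exists_aeval_eq_zero ℂ p hp.ne'
  have hre : z.re ≤ 0 := not_lt.mp fun h ↦ hroots z h hz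
  by_cases him : z.im = 0
  · refine ⟨X - C z.re, monic_X_sub_C _, by simp, fun i ↦ ?_, dvd_iff_isRoot.mpr ?_⟩
    · rcases i with _ | _ | i <;> simp [coeff_X, coeff_C, hre]
    · have hz' : (z.re : ℂ) = z := Complex.ext rfl (by simp [him])
      rwa [← hz', ← Complex.coe_algebraMap, aeval_algebraMap_apply_eq_algebraMap_eval,
        map_eq_zero] at hz
  · refine ⟨X ^ 2 - C (2 * z.re) * X + C (‖z‖ ^ 2), by monicity!,
      by rw [show natDegree _ = 2 by compute_degree!]; norm_num,
      fun i ↦ ?_, quadratic_dvd_of_aeval_eq_zero_im_ne_zero p hz him⟩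
    simp only [coeff_add, coeff_sub, coeff_C_mul, coeff_X, coeff_C, coeff_X_pow]
    rcases i with _ | _ | _ | i <;> simp
    linarith

theorem Monic.coeff_nonneg_of_forall_re_pos {p : ℝ[X]} (hp : p.Monic)
    (hroots : ∀ z : ℂ, 0 < z.re → aeval z p ≠ 0) (i : ℕ) : 0 ≤ p.coeff i := by
  induction hdeg : p.natDegree using Nat.strong_induction_on generalizing p i with
  | _ N ih =>
    rcases Nat.eq_zero_or_pos N with rfl | hN
    · rw [hp.natDegree_eq_zero.mp hdeg, coeff_one]
      split_ifs <;> norm_num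
    obtain ⟨d, hd, hd_deg, hd_nonneg, q, rfl⟩ :=
      exists_monic_dvd_coeff_nonneg (natDegree_pos_iff_degree_pos.mp (hdeg ▸ hN)) hroots
    have hq : q.Monic := hd.of_mul_monic_left hp
    rw [hd.natDegree_mul hq] at hdeg
    refine coeff_mul_nonneg hd_nonneg (fun j ↦ ih q.natDegree (by omega) hq ?_ j rfl) i
    intro z hz hqz
    exact hroots z hz (by rw [map_mul, hqz, mul_zero])

theorem aeval_sum_mul_one_add_sq_pow {K : Type*} [Field K] [Algebra ℝ K] (n : ℕ) (g : ℕ → ℝ)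
    {z : K} (hz : 1 + z ^ 2 ≠ 0) :
    aeval z (∑ k ∈ Finset.range (n + 1), C (g k) * X ^ k * (1 + X ^ 2) ^ (n - k)) =
      (1 + z ^ 2) ^ n * aeval (z / (1 + z ^ 2)) (∑ k ∈ Finset.range (n + 1), C (g k) * X ^ k) := by
  simp only [map_sum, Finset.mul_sum, map_mul, map_pow, map_add, map_one, aeval_X, aeval_C]
  refine Finset.sum_congr rfl fun k hk ↦ ?_
  rw [← pow_mul_pow_sub _ (Finset.mem_range_succ_iff.mp hk), div_pow]
  field_simp

end Polynomial

namespace HurwitzStable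

theorem leadingCoeff_mul_coeff_nonneg {p : ℝ[X]} (hp : HurwitzStable p) (i : ℕ) :
    0 ≤ p.leadingCoeff * p.coeff i := by
  by_cases hp0 : p = 0
  · simp [hp0]
  have hroots := hp.resolve_left hp0
  have hmonic := monic_mul_leadingCoeff_inv hp0
  have hnonneg := hmonic.coeff_nonneg_of_forall_re_pos (fun z hz h ↦ hroots z hz (by
    simpa [leadingCoeff_ne_zero.mpr hp0] using h)) i
  rw [coeff_mul_C] at hnonneg
  calc 0 ≤ p.leadingCoeff ^ 2 * (p.coeff i * p.leadingCoeff⁻¹) := by positivity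
    _ = p.leadingCoeff * p.coeff i := by field_simp [leadingCoeff_ne_zero.mpr hp0]

theorem leadingCoeff_mul_eval_pos {p : ℝ[X]} (hp : HurwitzStable p) (hp0 : p ≠ 0) {x : ℝ}
    (hx : 0 < x) : 0 < p.leadingCoeff * p.eval x := by
  rw [eval_eq_sum_range, Finset.mul_sum]
  refine Finset.sum_pos' (fun i _ ↦ ?_) ⟨p.natDegree, Finset.self_mem_range_succ _, ?_⟩
  · rw [← mul_assoc]
    exact mul_nonneg (hp.leadingCoeff_mul_coeff_nonneg i) (by positivity)
  · rw [coeff_natDegree, ← mul_assoc]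
    exact mul_pos (mul_self_pos.mpr (leadingCoeff_ne_zero.mpr hp0)) (pow_pos hx _)

end HurwitzStable

theorem hurwitzStable_iff_forall_or_forall {p : ℝ[X]} :
    HurwitzStable p ↔ (∀ z ∈ {z : ℂ | 0 < z.re}, aeval z p = 0) ∨
      ∀ z ∈ {z : ℂ | 0 < z.re}, aeval z p ≠ 0 := by
  refine or_congr_left ⟨fun h z _ ↦ by simp [h], fun h ↦ ?_⟩
  refine eq_zero_of_infinite_isRoot p ((Set.Ioi_infinite 0).mono fun x hx ↦ ?_)
  have hx : aeval (x : ℂ) p = 0 := h x hx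
  rwa [← Complex.coe_algebraMap, aeval_algebraMap_apply_eq_algebraMap_eval, map_eq_zero] at hx

theorem HurwitzStable.iff_of_surjOn {p q : ℝ[X]} {φ : ℂ → ℂ}
    (hmaps : Set.MapsTo φ {z | 0 < z.re} {z | 0 < z.re})
    (hsurj : Set.SurjOn φ {z | 0 < z.re} {z | 0 < z.re})
    (hroots : ∀ z ∈ {z : ℂ | 0 < z.re}, aeval z p = 0 ↔ aeval (φ z) q = 0) :
    HurwitzStable p ↔ HurwitzStable q := by
  rw [hurwitzStable_iff_forall_or_forall, hurwitzStable_iff_forall_or_forall,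
    hsurj.forall hmaps (p := fun w ↦ aeval w q = 0), hsurj.forall hmaps (p := fun w ↦ aeval w q ≠ 0)]
  exact or_congr (forall₂_congr hroots) (forall₂_congr fun z hz ↦ (hroots z hz).not)

theorem div_one_add_sq_eq_inv_add_inv {K : Type*} [Field K] (z : K) :
    z / (1 + z ^ 2) = (z + z⁻¹)⁻¹ := by
  rcases eq_or_ne z 0 with rfl | hz
  · simp
  rw [show z + z⁻¹ = (1 + z ^ 2) / z by field_simp; ring, inv_div]

namespace Complex

theorem inv_re_pos {z : ℂ} (hz : 0 < z.re) : 0 < z⁻¹.re := by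
  rw [inv_re]
  exact div_pos hz (normSq_pos.mpr fun h ↦ by simp [h] at hz)

theorem re_add_inv_pos_iff {z : ℂ} : 0 < (z + z⁻¹).re ↔ 0 < z.re := by
  rw [add_re, inv_re]
  refine ⟨fun h ↦ ?_, fun h ↦ add_pos h (div_pos h (normSq_pos.mpr fun h0 ↦ by simp [h0] at h))⟩
  by_contra! hz
  linarith [div_nonpos_of_nonpos_of_nonneg hz (normSq_nonneg z)]

theorem exists_ne_zero_add_inv_eq (u : ℂ) : ∃ z : ℂ, z ≠ 0 ∧ z + z⁻¹ = u := by
  -- the two roots of `z² - u z + 1` are inverse to each other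
  obtain ⟨s, hs⟩ := IsAlgClosed.exists_eq_mul_self (u ^ 2 - 4)
  have hprod : (u + s) / 2 * ((u - s) / 2) = 1 := by linear_combination hs / 4
  refine ⟨(u + s) / 2, left_ne_zero_of_mul_eq_one hprod, ?_⟩
  rw [inv_eq_of_mul_eq_one_right hprod]
  ring

theorem one_add_sq_ne_zero_of_re_pos {z : ℂ} (hz : 0 < z.re) : 1 + z ^ 2 ≠ 0 := by
  have hz0 : z ≠ 0 := fun h ↦ by simp [h] at hz
  have hinv : z + z⁻¹ ≠ 0 := fun h ↦ by simpa [h] using re_add_inv_pos_iff.mpr hz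
  calc 1 + z ^ 2 = z * (z + z⁻¹) := by field_simp; ring
    _ ≠ 0 := mul_ne_zero hz0 hinv

theorem mapsTo_div_one_add_sq :
    Set.MapsTo (fun z : ℂ ↦ z / (1 + z ^ 2)) {z | 0 < z.re} {z | 0 < z.re} := fun z hz ↦ by
  simpa only [Set.mem_ofPred_eq, div_one_add_sq_eq_inv_add_inv] using
    inv_re_pos (re_add_inv_pos_iff.mpr hz)

theorem surjOn_div_one_add_sq :
    Set.SurjOn (fun z : ℂ ↦ z / (1 + z ^ 2)) {z | 0 < z.re} {z | 0 < z.re} := fun w hw ↦ by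
  obtain ⟨z, -, hz⟩ := exists_ne_zero_add_inv_eq w⁻¹
  refine ⟨z, re_add_inv_pos_iff.mp (hz ▸ inv_re_pos hw), ?_⟩
  simp only [div_one_add_sq_eq_inv_add_inv, hz, inv_inv]

end Complex

theorem hurwitzStable_one_add_X_pow_mul_iff (n ν : ℕ) (g : ℕ → ℝ) :
    HurwitzStable ((1 + X) ^ ν *
        ∑ k ∈ Finset.range (n + 1), C (g k) * X ^ k * (1 + X ^ 2) ^ (n - k)) ↔
      HurwitzStable (∑ k ∈ Finset.range (n + 1), C (g k) * X ^ k) := by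
  refine HurwitzStable.iff_of_surjOn Complex.mapsTo_div_one_add_sq
    Complex.surjOn_div_one_add_sq fun z (hz : 0 < z.re) ↦ ?_
  have h1 : 1 + z ≠ 0 := fun h ↦ by
    have := congrArg Complex.re h
    simp only [Complex.add_re, Complex.one_re, Complex.zero_re] at this
    linarith
  have h2 := Complex.one_add_sq_ne_zero_of_re_pos hz
  rw [map_mul, aeval_sum_mul_one_add_sq_pow n g h2]
  simp [h1, h2]

theorem stmt_10_general (n : ℕ) (ν : ℕ) (g : ℕ → ℝ) :
    (HurwitzStable ((1 + X) ^ ν *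
        ∑ k ∈ Finset.range (n + 1), C (g k) * X ^ k * (1 + X ^ 2) ^ (n - k)) ↔
      HurwitzStable (∑ k ∈ Finset.range (n + 1), C (g k) * X ^ k)) ∧
    (HurwitzStable ((1 + X) ^ ν *
        ∑ k ∈ Finset.range (n + 1), C (g k) * X ^ k * (1 + X ^ 2) ^ (n - k)) →
      0 < ((1 + X) ^ ν *
        ∑ k ∈ Finset.range (n + 1), C (g k) * X ^ k * (1 + X ^ 2) ^ (n - k)).leadingCoeff →
      ∀ k, k ≤ n → 0 ≤ g k) := by
  set G : ℝ[X] := ∑ k ∈ Finset.range (n + 1), C (g k) * X ^ k with hG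
  set f : ℝ[X] := (1 + X) ^ ν *
    ∑ k ∈ Finset.range (n + 1), C (g k) * X ^ k * (1 + X ^ 2) ^ (n - k) with hf
  have hstable : HurwitzStable f ↔ HurwitzStable G := hurwitzStable_one_add_X_pow_mul_iff n ν g
  refine ⟨hstable, fun hf_stable hlc k hk ↦ ?_⟩
  have hcoeff : G.coeff k = g k := by
    simp [hG, coeff_C_mul, coeff_X_pow, Nat.lt_succ_of_le hk]
  rw [← hcoeff]
  by_cases hG0 : G = 0
  · simp [hG0]
  have hG_stable := hstable.mp hf_stable
  have hf_eval : f.eval 1 = 2 ^ ν * (2 ^ n * G.eval (1 / 2)) := by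
    have hsubst := aeval_sum_mul_one_add_sq_pow (K := ℝ) n g (z := 1) (by norm_num)
    simp only [coe_aeval_eq_eval] at hsubst
    rw [hf, eval_mul, hsubst, ← hG]
    norm_num
  have hf_pos : 0 < f.eval 1 := pos_of_mul_pos_right
    (hf_stable.leadingCoeff_mul_eval_pos (fun h ↦ by simp [h] at hlc) one_pos) hlc.le
  have hG_pos : 0 < G.eval (1 / 2) := by
    rw [hf_eval] at hf_pos
    exact pos_of_mul_pos_right (pos_of_mul_pos_right hf_pos (by positivity)) (by positivity)
  have hlcG : 0 < G.leadingCoeff :=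
    pos_of_mul_pos_left (hG_stable.leadingCoeff_mul_eval_pos hG0 (by norm_num)) hG_pos.le
  exact nonneg_of_mul_nonneg_right (hG_stable.leadingCoeff_mul_coeff_nonneg k) hlcG

theorem stmt_10 (n : ℕ) (ν : ℕ) (hν : ν = 0 ∨ ν = 1) (g : ℕ → ℝ) :
    (HurwitzStable ((1 + X) ^ ν *
        ∑ k ∈ Finset.range (n + 1), C (g k) * X ^ k * (1 + X ^ 2) ^ (n - k)) ↔
      HurwitzStable (∑ k ∈ Finset.range (n + 1), C (g k) * X ^ k)) ∧
    (HurwitzStable ((1 + X) ^ ν *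
        ∑ k ∈ Finset.range (n + 1), C (g k) * X ^ k * (1 + X ^ 2) ^ (n - k)) →
      0 < ((1 + X) ^ ν *
        ∑ k ∈ Finset.range (n + 1), C (g k) * X ^ k * (1 + X ^ 2) ^ (n - k)).leadingCoeff →
      ∀ k, k ≤ n → 0 ≤ g k) :=
  stmt_10_general n ν g
end

section
/- Let β, μ, ν : ℕ → ℝ be real sequences with μ_n ≤ 0 ≤ ν_n for all n, and let (T_n) be a sequence of real polynomials such that, with m_n = deg T_n, one has deg T_{n+1} = deg T_n + 1 and T_{n+1}(x) = (−m_nμ_n x² + β_n x + β_n + m_nν_n)·T_n(x) + (μ_n x³ + ν_n x² − ν_n x − μ_n)·T_n′(x) for all n. Suppose that μ_n + ν_n ≤ 0 and 2β_n + m_n(μ_n + ν_n) ≥ 0 for all n, and that T_0 is Hurwitz stable. Then T_n is Hurwitz stable for all n ∈ ℕ. -/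
/-!
Write `A` and `B` for the two coefficient polynomials of the recurrence, `x = Re z > 0` and
`m = deg f` for a Hurwitz stable `f`. Factoring `f` over `ℂ`, each root `ρ` (with `Re ρ ≤ 0`)
contributes `2x / (z - ρ)` to `2x f'(z) / f(z)`, and this lies in the closed unit disc about `1`;
hence `‖2x f'(z) - m f(z)‖ ≤ m ‖f(z)‖`. If `A(z) f(z) + B(z) f'(z) = 0`, then
`B(z) (2x f'(z) - m f(z)) = -(2x A(z) + m B(z)) f(z)` with `f(z) ≠ 0`, which forces
`‖2x A(z) + m B(z)‖ ≤ m ‖B(z)‖`. The sign conditions on `β, μ, ν` give the opposite strict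
inequality by an explicit sum-of-nonnegative-terms certificate, so `T_{n+1}` has no zero in the
right half-plane.
-/

open Polynomial

lemma norm_two_mul_sub_le_norm {x : ℝ} {u : ℂ} (hx : 0 < x) (hu : x ≤ u.re) :
    ‖2 * (x : ℂ) - u‖ ≤ ‖u‖ := by
  rw [← sq_le_sq₀ (norm_nonneg _) (norm_nonneg _), Complex.sq_norm, Complex.sq_norm,
    Complex.normSq_apply, Complex.normSq_apply]
  simp only [Complex.sub_re, Complex.sub_im, Complex.mul_re, Complex.mul_im, Complex.re_ofNat,
    Complex.im_ofNat, Complex.ofReal_re, Complex.ofReal_im]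
  nlinarith

lemma norm_two_mul_add_mul_sub_le {x k : ℝ} {a b u : ℂ} (hx : 0 < x) (hu : x ≤ u.re)
    (h : ‖2 * x * b - k * a‖ ≤ k * ‖a‖) :
    ‖2 * x * (a + u * b) - (k + 1) * (u * a)‖ ≤ (k + 1) * ‖u * a‖ :=
  calc ‖2 * x * (a + u * b) - (k + 1) * (u * a)‖
      = ‖u * (2 * x * b - k * a) + (2 * x - u) * a‖ := by ring_nf
    _ ≤ ‖u‖ * ‖2 * x * b - k * a‖ + ‖2 * x - u‖ * ‖a‖ := by
      grw [norm_add_le, norm_mul, norm_mul]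
    _ ≤ ‖u‖ * (k * ‖a‖) + ‖u‖ * ‖a‖ := by grw [h, norm_two_mul_sub_le_norm hx hu]
    _ = (k + 1) * ‖u * a‖ := by rw [norm_mul]; ring

lemma norm_two_re_mul_eval_derivative_prod_sub_le {s : Multiset ℂ} (hs : ∀ ρ ∈ s, ρ.re ≤ 0)
    {z : ℂ} (hz : 0 < z.re) :
    ‖2 * z.re * (derivative (s.map (X - C ·)).prod).eval z
        - Multiset.card s * ((s.map (X - C ·)).prod).eval z‖
      ≤ Multiset.card s * ‖((s.map (X - C ·)).prod).eval z‖ := by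
  induction s using Multiset.induction_on with
  | empty => simp
  | cons ρ s ih =>
    rw [Multiset.forall_mem_cons] at hs
    have hu : z.re ≤ (z - ρ).re := by rw [Complex.sub_re]; linarith [hs.1]
    have := norm_two_mul_add_mul_sub_le hz hu (ih hs.2)
    simp only [Multiset.map_cons, Multiset.prod_cons, derivative_mul, Multiset.card_cons]
    push_cast
    simpa using this

lemma HurwitzStable.norm_two_re_mul_aeval_derivative_sub_le {f : ℝ[X]} (hf : HurwitzStable f)
    {z : ℂ} (hz : 0 < z.re) :
    ‖2 * z.re * aeval z (derivative f) - f.natDegree * aeval z f‖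
      ≤ f.natDegree * ‖aeval z f‖ := by
  rcases hf with rfl | hf
  · simp
  have hsplit := IsAlgClosed.splits (f.map (algebraMap ℝ ℂ))
  have hcard : Multiset.card (f.map (algebraMap ℝ ℂ)).roots = f.natDegree := by
    rw [← hsplit.natDegree_eq_card_roots, natDegree_map]
  have hroots : ∀ ρ ∈ (f.map (algebraMap ℝ ℂ)).roots, ρ.re ≤ 0 := fun ρ hρ ↦ by
    by_contra! hre
    exact hf ρ hre (by simpa [aeval_def, eval_map] using (mem_roots'.mp hρ).2)
  rw [aeval_def, aeval_def, ← eval_map, ← eval_map, ← derivative_map, hsplit.eq_prod_roots,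
    ← hcard]
  generalize (f.map (algebraMap ℝ ℂ)).leadingCoeff = c at *
  generalize (f.map (algebraMap ℝ ℂ)).roots = s at *
  rw [derivative_C_mul, eval_mul, eval_mul, eval_C]
  have hprod := norm_two_re_mul_eval_derivative_prod_sub_le hroots hz
  set P := (s.map (X - C ·)).prod
  calc _ = ‖c‖ * ‖2 * z.re * eval z (derivative P) - Multiset.card s * eval z P‖ := by
        rw [← norm_mul]; ring_nf
    _ ≤ ‖c‖ * (Multiset.card s * ‖eval z P‖) := by grw [hprod]
    _ = _ := by rw [norm_mul]; ring

lemma norm_mul_lt_norm_two_re_mul_add {M β μ ν : ℝ} {z : ℂ} (hM : 0 ≤ M) (hμ : μ ≤ 0)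
    (hν : 0 ≤ ν) (hsum : μ + ν ≤ 0) (hβ : 0 ≤ 2 * β + M * (μ + ν)) (hne : β ≠ 0 ∨ M * ν ≠ 0)
    (hz : 0 < z.re) :
    M * ‖μ * z ^ 3 + ν * z ^ 2 - ν * z - μ‖
      < ‖2 * z.re * (-(M * μ) * z ^ 2 + β * z + (β + M * ν))
          + M * (μ * z ^ 3 + ν * z ^ 2 - ν * z - μ)‖ := by
  set x := z.re
  set y := z.im
  have hβ0 : 0 ≤ β := by nlinarith
  -- The difference of the squared norms is `4 x` times this; `(1 + x) ^ 2 + y ^ 2 = ‖z + 1‖ ^ 2`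
  -- and `(x ^ 2 + y ^ 2 - 1) ^ 2 + 4 * x ^ 2 = ‖z ^ 2 + 1‖ ^ 2`.
  have hS : 0 < β * (β + M * ν) * x * ((1 + x) ^ 2 + y ^ 2)
      - M * μ * β * ((1 - y ^ 2) ^ 2 + x * (1 + y ^ 2) + 2 * x ^ 2 * y ^ 2 + x ^ 3 + x ^ 4)
      + M ^ 2 * (μ + ν) ^ 2 * x ^ 2
      - M ^ 2 * μ * ν * ((x ^ 2 + y ^ 2 - 1) ^ 2 + 4 * x ^ 2)
      - M * (μ + ν) * (2 * β + M * (μ + ν)) * y ^ 2 := by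
    have h1 : 0 ≤ β * (β + M * ν) * x * ((1 + x) ^ 2 + y ^ 2) := by positivity
    have h2 : 0 ≤ -(M * μ * β) * ((1 - y ^ 2) ^ 2 + x * (1 + y ^ 2) + 2 * x ^ 2 * y ^ 2
        + x ^ 3 + x ^ 4) := by
      have : 0 ≤ -(M * μ * β) := by nlinarith [mul_nonneg hM hβ0]
      positivity
    have h3 : 0 ≤ M ^ 2 * (μ + ν) ^ 2 * x ^ 2 := by positivity
    have h4 : 0 ≤ -(M ^ 2 * μ * ν) * ((x ^ 2 + y ^ 2 - 1) ^ 2 + 4 * x ^ 2) := by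
      have : 0 ≤ -(M ^ 2 * μ * ν) := by nlinarith [mul_nonneg (sq_nonneg M) hν]
      positivity
    have h5 : 0 ≤ -(M * (μ + ν)) * (2 * β + M * (μ + ν)) * y ^ 2 := by
      have : 0 ≤ -(M * (μ + ν)) := by nlinarith
      positivity
    rcases hne with hβ' | hMν
    · have : 0 < β * (β + M * ν) * x * ((1 + x) ^ 2 + y ^ 2) := by
        have := lt_of_le_of_ne hβ0 (Ne.symm hβ')
        have : 0 < β + M * ν := by nlinarith [mul_nonneg hM hν]
        positivity
      linarith
    · have : 0 < -(M ^ 2 * μ * ν) := by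
        have hMν' : 0 < M * ν := lt_of_le_of_ne (mul_nonneg hM hν) (Ne.symm hMν)
        have hMμ : M * μ < 0 := by nlinarith [mul_nonpos_iff.2 (Or.inl ⟨hM, hsum⟩)]
        nlinarith [mul_pos (neg_pos.2 hMμ) hMν']
      have : 0 < -(M ^ 2 * μ * ν) * ((x ^ 2 + y ^ 2 - 1) ^ 2 + 4 * x ^ 2) := by positivity
      linarith
  rw [← sq_lt_sq₀ (by positivity) (norm_nonneg _), mul_pow, Complex.sq_norm, Complex.sq_norm,
    Complex.normSq_apply, Complex.normSq_apply, ← sub_pos]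
  convert mul_pos (mul_pos four_pos hz) hS using 1
  simp only [pow_succ, pow_zero, one_mul, neg_mul, Complex.add_re, Complex.add_im,
    Complex.sub_re, Complex.sub_im, Complex.mul_re, Complex.mul_im, Complex.neg_re,
    Complex.neg_im, Complex.re_ofNat, Complex.im_ofNat, Complex.ofReal_re, Complex.ofReal_im,
    mul_zero, zero_mul, sub_zero, add_zero]
  ring

noncomputable def hurwitzRecurrence (β μ ν : ℝ) (f : ℝ[X]) : ℝ[X] :=
  (C (-((f.natDegree : ℝ) * μ)) * X ^ 2 + C β * X + C (β + (f.natDegree : ℝ) * ν)) * f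
    + (C μ * X ^ 3 + C ν * X ^ 2 - C ν * X - C μ) * derivative f

lemma hurwitzRecurrence_zero (β μ ν : ℝ) : hurwitzRecurrence β μ ν 0 = 0 := by
  simp [hurwitzRecurrence]

lemma hurwitzRecurrence_eq_zero {β μ ν : ℝ} {f : ℝ[X]} (hμ : μ ≤ 0)
    (hβ : 0 ≤ 2 * β + (f.natDegree : ℝ) * (μ + ν)) (hβ0 : β = 0) (hν : (f.natDegree : ℝ) * ν = 0) :
    hurwitzRecurrence β μ ν f = 0 := by
  have hμ0 : (f.natDegree : ℝ) * μ = 0 := by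
    nlinarith [mul_nonpos_of_nonneg_of_nonpos (Nat.cast_nonneg (α := ℝ) f.natDegree) hμ]
  rcases eq_or_ne f.natDegree 0 with hf | hf
  · rw [eq_C_of_natDegree_eq_zero hf]
    simp [hurwitzRecurrence, hβ0]
  · have hf' : (f.natDegree : ℝ) ≠ 0 := Nat.cast_ne_zero.2 hf
    simp [hurwitzRecurrence, hβ0, (mul_eq_zero.1 hμ0).resolve_left hf',
      (mul_eq_zero.1 hν).resolve_left hf']

lemma HurwitzStable.hurwitzRecurrence {f : ℝ[X]} (hf : HurwitzStable f) (hf0 : f ≠ 0)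
    {β μ ν : ℝ} (hμ : μ ≤ 0) (hν : 0 ≤ ν) (hsum : μ + ν ≤ 0)
    (hβ : 0 ≤ 2 * β + (f.natDegree : ℝ) * (μ + ν)) (hne : β ≠ 0 ∨ (f.natDegree : ℝ) * ν ≠ 0) :
    HurwitzStable (hurwitzRecurrence β μ ν f) := by
  refine Or.inr fun z hz hzero ↦ ?_
  set M : ℝ := (f.natDegree : ℝ)
  set t := aeval z f
  set d := aeval z (derivative f)
  set A : ℂ := -(M * μ) * z ^ 2 + β * z + (β + M * ν)
  set B : ℂ := μ * z ^ 3 + ν * z ^ 2 - ν * z - μ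
  have ht : t ≠ 0 := hf.resolve_left hf0 z hz
  have heval : A * t + B * d = 0 := by
    rw [← hzero]
    simp [_root_.hurwitzRecurrence, A, B, t, d, M]
  have hdisc : ‖2 * z.re * d - M * t‖ ≤ M * ‖t‖ := by
    simpa [M] using hf.norm_two_re_mul_aeval_derivative_sub_le hz
  have hkey : M * ‖B‖ < ‖2 * z.re * A + M * B‖ :=
    norm_mul_lt_norm_two_re_mul_add (Nat.cast_nonneg _) hμ hν hsum hβ hne hz
  have hfactor : B * (2 * z.re * d - M * t) = -((2 * z.re * A + M * B) * t) := by
    linear_combination 2 * z.re * heval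
  refine lt_irrefl (‖2 * z.re * A + M * B‖ * ‖t‖) ?_
  calc _ = ‖B‖ * ‖2 * z.re * d - M * t‖ := by
        rw [← norm_mul, ← norm_mul, hfactor, norm_neg]
    _ ≤ ‖B‖ * (M * ‖t‖) := by gcongr
    _ < ‖2 * z.re * A + M * B‖ * ‖t‖ := by
        rw [← mul_assoc, mul_comm ‖B‖]
        gcongr

theorem stmt_11 (β μ ν : ℕ → ℝ) (T : ℕ → Polynomial ℝ)
    (hμν : ∀ n, μ n ≤ 0 ∧ 0 ≤ ν n)
    (hdeg : ∀ n, (T (n + 1)).natDegree = (T n).natDegree + 1)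
    (hrec : ∀ n, T (n + 1) =
      (C (-(((T n).natDegree : ℝ) * μ n)) * X ^ 2 + C (β n) * X
          + C (β n + ((T n).natDegree : ℝ) * ν n)) * T n
        + (C (μ n) * X ^ 3 + C (ν n) * X ^ 2 - C (ν n) * X - C (μ n)) *
            derivative (T n))
    (hsum : ∀ n, μ n + ν n ≤ 0)
    (hβ : ∀ n, 0 ≤ 2 * β n + ((T n).natDegree : ℝ) * (μ n + ν n))
    (hT0 : HurwitzStable (T 0)) :
    ∀ n, HurwitzStable (T n) := by
  intro n
  induction n with
  | zero => exact hT0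
  | succ n ih =>
    have hstep : T (n + 1) = hurwitzRecurrence (β n) (μ n) (ν n) (T n) := hrec n
    have hsucc : T (n + 1) ≠ 0 := ne_zero_of_natDegree_gt (n := 0) (by rw [hdeg n]; omega)
    have hTn : T n ≠ 0 := by
      rintro h
      exact hsucc (by rw [hstep, h, hurwitzRecurrence_zero])
    have hne : β n ≠ 0 ∨ ((T n).natDegree : ℝ) * ν n ≠ 0 := by
      by_contra! h
      exact hsucc (hstep ▸ hurwitzRecurrence_eq_zero (hμν n).1 (hβ n) h.1 h.2)
    rw [hstep]
    exact ih.hurwitzRecurrence hTn (hμν n).1 (hμν n).2 (hsum n) (hβ n) hne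
end

section
/- Let r, s ∈ ℝ with r ≥ 1 and r + s ≥ 1. Then for all complex numbers x, y with Re(x) > 0 and Re(y) > 0, one has ((1 − x)² + r(1 + x)²)·(1 + y) + s·(1 + x)·(1 + xy) ≠ 0. (That is, the bivariate polynomial ((1−x)² + r(1+x)²)(1+y) + s(1+x)(1+xy) is Hurwitz stable in two variables.) -/
/-!
Under the Cayley substitution `z = (1 - x) / (1 + x)`, which maps the right half-plane into the
unit disc, the polynomial equals `(1 + x)² (f z + y f (-z))` with `f z = z² + t z + m`,
`t = s / 2`, `m = r + s / 2`. A zero would force `Re (f z * conj (f (-z))) = -Re y |f (-z)|² ≤ 0`.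
But this real part is `|z² + m|² - t² |z|²`, which is positive on the unit disc because
the hypotheses on `r, s` give `m ≥ 1 + |t|`.
-/

open ComplexConjugate

lemma add_mul_ne_zero_of_re_mul_conj_pos {p q y : ℂ} (hpq : 0 < (p * conj q).re)
    (hy : 0 ≤ y.re) : p + y * q ≠ 0 := by
  intro h
  have hp : p = -y * q := by linear_combination h
  have hre : (p * conj q).re = -(y.re * Complex.normSq q) := by
    rw [hp, mul_assoc, Complex.mul_conj]
    simp [Complex.mul_re]
  nlinarith [mul_nonneg hy (Complex.normSq_nonneg q)]

lemma norm_one_sub_div_one_add_lt_one {x : ℂ} (hx : 0 < x.re) : ‖(1 - x) / (1 + x)‖ < 1 := by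
  have hsq : ‖1 - x‖ ^ 2 < ‖1 + x‖ ^ 2 := by
    simp only [Complex.sq_norm, Complex.normSq_apply, Complex.sub_re, Complex.add_re,
      Complex.sub_im, Complex.add_im, Complex.one_re, Complex.one_im]
    nlinarith
  have hlt : ‖1 - x‖ < ‖1 + x‖ := lt_of_pow_lt_pow_left₀ 2 (norm_nonneg _) hsq
  rwa [norm_div, div_lt_one ((norm_nonneg _).trans_lt hlt)]

lemma re_quadratic_mul_conj_reflect (z : ℂ) (t m : ℝ) :
    ((z ^ 2 + t * z + m) * conj (z ^ 2 - t * z + m)).re = ‖z ^ 2 + m‖ ^ 2 - t ^ 2 * ‖z‖ ^ 2 := by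
  rw [Complex.sq_norm, Complex.sq_norm]
  simp only [Complex.normSq_apply, Complex.mul_re, Complex.mul_im,
    Complex.add_re, Complex.add_im, Complex.sub_re, Complex.sub_im, Complex.conj_re,
    Complex.conj_im, Complex.ofReal_re, Complex.ofReal_im, pow_two]
  ring

lemma re_quadratic_mul_conj_reflect_pos {z : ℂ} {t m : ℝ} (hz : ‖z‖ < 1) (hm : 1 + |t| ≤ m) :
    0 < ((z ^ 2 + t * z + m) * conj (z ^ 2 - t * z + m)).re := by
  have hlower : m - ‖z‖ ^ 2 ≤ ‖z ^ 2 + m‖ := by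
    have := norm_sub_norm_le ((m : ℂ)) (-z ^ 2)
    rw [Complex.norm_real, Real.norm_of_nonneg (by linarith [abs_nonneg t]), norm_neg,
      norm_pow, sub_neg_eq_add, add_comm] at this
    exact this
  have hlt : |t| * ‖z‖ < ‖z ^ 2 + m‖ := by
    nlinarith [abs_nonneg t, norm_nonneg z]
  rw [re_quadratic_mul_conj_reflect, sub_pos, ← sq_abs t, ← mul_pow]
  exact pow_lt_pow_left₀ hlt (by positivity) two_ne_zero

lemma one_add_abs_half_le {r s : ℝ} (hr : 1 ≤ r) (hrs : 1 ≤ r + s) : 1 + |s / 2| ≤ r + s / 2 := by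
  rcases abs_cases (s / 2) with ⟨h, _⟩ | ⟨h, _⟩ <;> linarith

lemma eq_one_add_sq_mul_of_cayley (r s : ℝ) {x z : ℂ} (hz : (1 + x) * z = 1 - x) (y : ℂ) :
    ((1 - x) ^ 2 + (r : ℂ) * (1 + x) ^ 2) * (1 + y) + (s : ℂ) * (1 + x) * (1 + x * y) =
      (1 + x) ^ 2 * ((z ^ 2 + ((s / 2 : ℝ) : ℂ) * z + ((r + s / 2 : ℝ) : ℂ))
        + y * (z ^ 2 - ((s / 2 : ℝ) : ℂ) * z + ((r + s / 2 : ℝ) : ℂ))) := by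
  push_cast
  linear_combination (-((1 - x + (1 + x) * z) * (1 + y) + s * (1 + x) * (1 - y) / 2)) * hz

theorem stmt_12 (r s : ℝ) (hr : 1 ≤ r) (hrs : 1 ≤ r + s) :
    ∀ x y : ℂ, 0 < x.re → 0 < y.re →
      ((1 - x) ^ 2 + (r : ℂ) * (1 + x) ^ 2) * (1 + y)
        + (s : ℂ) * (1 + x) * (1 + x * y) ≠ 0 := by
  intro x y hx hy
  have hx1 : 1 + x ≠ 0 := ne_of_apply_ne Complex.re <| by
    rw [Complex.add_re, Complex.one_re, Complex.zero_re]
    linarith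
  rw [eq_one_add_sq_mul_of_cayley r s (mul_div_cancel₀ (1 - x) hx1)]
  exact mul_ne_zero (pow_ne_zero 2 hx1) <| add_mul_ne_zero_of_re_mul_conj_pos
    (re_quadratic_mul_conj_reflect_pos (norm_one_sub_div_one_add_lt_one hx)
      (one_add_abs_half_le hr hrs)) hy.le
end

section
/- Let δ be a positive integer and let (P_n)_{n≥0} be the sequence of real polynomials defined by P_0(x) = 1 and P_{n+1}(x) = ((n/δ)x² + x + 1 + n/δ)·P_n(x) + (1/δ)(1 − x)(1 + x²)·P_n′(x) for n ≥ 0. Then P_n is unimodal for every n ≥ 3. -/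
/-!
Write `c n k` for the `k`-th coefficient of `P n`. The recursion becomes the four-term recurrence
`δ c (n+1) k = (δ+n-k) c n k + (δ+k-1) c n (k-1) + (n-k+2) c n (k-2) + (k+1) c n (k+1)`,
so each row `c n` is supported on `[0, n]` and symmetric, `c n k = c n (n-k)`. The backward
differences `d n k = c n k - c n (k-1)` obey a recurrence whose coefficients `k+1`, `δ+n-k+1`,
`δ+k-1`, `n-k+3` are nonnegative on the first half, and are antisymmetric, `d n k = -d n (n+1-k)`.
Hence monotonicity of the first half of a row passes to the next row, except at the central
difference of an even row `2m+2`. That one is reached in two steps from row `2m`, which writes it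
as a combination of `d (2m) m, …, d (2m) (m-3)` with coefficients that are nonnegative once
`δ ≥ 1`. The induction starts from rows `3` and `4`; row `2` need not be unimodal (`δ = 1`).
-/

open Polynomial

/-- A real polynomial `f` of degree `m` is unimodal if its coefficients increase up to
some index `t` and decrease from `t` to `m`. -/
def Unimodal (f : Polynomial ℝ) : Prop :=
  ∃ t : ℕ, (∀ i : ℕ, i + 1 ≤ t → f.coeff i ≤ f.coeff (i + 1)) ∧
    (∀ i : ℕ, t ≤ i → i + 1 ≤ f.natDegree → f.coeff (i + 1) ≤ f.coeff i)

section CoeffZ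

variable {R : Type*} [Ring R]

noncomputable def coeffZ (p : R[X]) (k : ℤ) : R := if 0 ≤ k then p.coeff k.toNat else 0

theorem coeffZ_natCast (p : R[X]) (k : ℕ) : coeffZ p k = p.coeff k := by
  simp [coeffZ]

theorem coeffZ_of_neg (p : R[X]) {k : ℤ} (hk : k < 0) : coeffZ p k = 0 := by
  simp [coeffZ, not_le.mpr hk]

theorem coeffZ_one (k : ℤ) : coeffZ (1 : R[X]) k = if k = 0 then 1 else 0 := by
  rcases lt_or_ge k 0 with hk | hk
  · simp [coeffZ_of_neg _ hk, hk.ne]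
  · lift k to ℕ using hk
    simp [coeffZ_natCast, coeff_one]

theorem coeffZ_add (p q : R[X]) (k : ℤ) : coeffZ (p + q) k = coeffZ p k + coeffZ q k := by
  unfold coeffZ; split <;> simp

theorem coeffZ_sub (p q : R[X]) (k : ℤ) : coeffZ (p - q) k = coeffZ p k - coeffZ q k := by
  unfold coeffZ; split <;> simp

theorem coeffZ_C_mul (a : R) (p : R[X]) (k : ℤ) : coeffZ (C a * p) k = a * coeffZ p k := by
  unfold coeffZ; split <;> simp

theorem coeffZ_X_mul (p : R[X]) (k : ℤ) : coeffZ (X * p) k = coeffZ p (k - 1) := by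
  rcases lt_or_ge k 1 with hk | hk
  · rw [coeffZ_of_neg _ (by omega : k - 1 < 0)]
    rcases (by omega : k < 0 ∨ k = 0) with hk | rfl
    · exact coeffZ_of_neg _ hk
    · simp [coeffZ]
  · obtain ⟨j, rfl⟩ : ∃ j : ℕ, k = j + 1 := ⟨(k - 1).toNat, by omega⟩
    rw [add_sub_cancel_right, ← Nat.cast_succ, coeffZ_natCast, coeffZ_natCast, coeff_X_mul]

theorem coeffZ_derivative (p : R[X]) (k : ℤ) :
    coeffZ (derivative p) k = (k + 1) * coeffZ p (k + 1) := by
  rcases lt_or_ge k 0 with hk | hk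
  · rw [coeffZ_of_neg _ hk]
    rcases (by omega : k + 1 < 0 ∨ k = -1) with hk | rfl
    · rw [coeffZ_of_neg _ hk, mul_zero]
    · simp
  · lift k to ℕ using hk
    rw [← Nat.cast_succ, coeffZ_natCast, coeffZ_natCast, coeff_derivative]
    have := (Nat.cast_commute (k + 1) (p.coeff (k + 1))).eq
    push_cast at this ⊢
    exact this.symm

end CoeffZ

structure IsCoeffTable (δ : ℝ) (c : ℕ → ℤ → ℝ) : Prop where
  zero : ∀ k, c 0 k = if k = 0 then 1 else 0
  succ : ∀ (n : ℕ) (k : ℤ), δ * c (n + 1) k = (δ + n - k) * c n k + (δ + k - 1) * c n (k - 1)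
    + (n - k + 2) * c n (k - 2) + (k + 1) * c n (k + 1)

def bwdDiff (a : ℤ → ℝ) (k : ℤ) : ℝ := a k - a (k - 1)

def IncreasesToMiddle (a : ℤ → ℝ) (n : ℕ) : Prop := ∀ k : ℤ, 2 * k ≤ n + 1 → 0 ≤ bwdDiff a k

theorem bwdDiff_eq_neg_of_symm {a : ℤ → ℝ} {n : ℤ} (h : ∀ k, a k = a (n - k)) (k : ℤ) :
    bwdDiff a k = -bwdDiff a (n + 1 - k) := by
  rw [bwdDiff, bwdDiff, h k, h (k - 1), show n + 1 - k - 1 = n - k by ring,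
    show n - (k - 1) = n + 1 - k by ring]
  ring

namespace IsCoeffTable

variable {δ : ℝ} {c : ℕ → ℤ → ℝ}

theorem eq_zero_of_neg (h : IsCoeffTable δ c) (hδ : δ ≠ 0) (n : ℕ) {k : ℤ} (hk : k < 0) :
    c n k = 0 := by
  induction n generalizing k with
  | zero => simp [h.zero, hk.ne]
  | succ n ih =>
    have hlast : (k + 1) * c n (k + 1) = 0 := by
      rcases (by omega : k + 1 = 0 ∨ k + 1 < 0) with h0 | h0
      · rw [show (k : ℝ) + 1 = 0 by exact_mod_cast h0, zero_mul]
      · simp [ih h0]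
    have := h.succ n k
    rw [ih hk, ih (by omega), ih (by omega), hlast] at this
    simpa [hδ] using this

theorem bwdDiff_eq_zero_of_neg (h : IsCoeffTable δ c) (hδ : δ ≠ 0) (n : ℕ) {k : ℤ}
    (hk : k < 0) : bwdDiff (c n) k = 0 := by
  rw [bwdDiff, h.eq_zero_of_neg hδ n hk, h.eq_zero_of_neg hδ n (by omega), sub_zero]

theorem symm (h : IsCoeffTable δ c) (hδ : δ ≠ 0) (n : ℕ) (k : ℤ) : c n k = c n (n - k) := by
  induction n generalizing k with
  | zero => simp [h.zero]
  | succ n ih =>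
    apply mul_left_cancel₀ hδ
    rw [h.succ, h.succ, ih k, ih (k - 1), ih (k - 2), ih (k + 1)]
    push_cast
    ring_nf

theorem bwdDiff_succ (h : IsCoeffTable δ c) (n : ℕ) (k : ℤ) :
    δ * bwdDiff (c (n + 1)) k = (k + 1) * bwdDiff (c n) (k + 1)
      + (δ + n - k + 1) * bwdDiff (c n) k + (δ + k - 1) * bwdDiff (c n) (k - 1)
      + (n - k + 3) * bwdDiff (c n) (k - 2) := by
  have hk := h.succ n k
  have hk' := h.succ n (k - 1)
  rw [show k - 1 - 1 = k - 2 by ring, show k - 1 - 2 = k - 3 by ring,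
    show k - 1 + 1 = k by ring] at hk'
  simp only [bwdDiff, show k + 1 - 1 = k by ring, show k - 1 - 1 = k - 2 by ring,
    show k - 2 - 1 = k - 3 by ring]
  push_cast at hk'
  linear_combination hk - hk'

theorem bwdDiff_center (h : IsCoeffTable δ c) (hδ : δ ≠ 0) (m : ℕ) :
    δ * bwdDiff (c (2 * m + 2)) (m + 1)
      = (δ - 2) * bwdDiff (c (2 * m + 1)) m + (m + 3) * bwdDiff (c (2 * m + 1)) (m - 1) := by
  have hanti := bwdDiff_eq_neg_of_symm (h.symm hδ (2 * m + 1))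
  have hmid := hanti (m + 1)
  have hnext := hanti (m + 2)
  rw [show ((2 * m + 1 : ℕ) : ℤ) + 1 - (m + 2) = m by push_cast; ring] at hnext
  rw [show ((2 * m + 1 : ℕ) : ℤ) + 1 - (m + 1) = m + 1 by push_cast; ring] at hmid
  have hs := h.bwdDiff_succ (2 * m + 1) (m + 1)
  rw [show (m : ℤ) + 1 + 1 = m + 2 by ring, show (m : ℤ) + 1 - 1 = m by ring,
    show (m : ℤ) + 1 - 2 = m - 1 by ring] at hs
  push_cast at hs
  linear_combination hs + (m + 2) * hnext + (δ + m + 1) / 2 * hmid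

theorem bwdDiff_succ_nonneg (h : IsCoeffTable δ c) (hδ : 1 ≤ δ) {n : ℕ}
    (hn : IncreasesToMiddle (c n) n) {k : ℤ} (hk : 2 * k ≤ n + 2) (hmid : 2 * k ≠ n + 1) :
    0 ≤ bwdDiff (c (n + 1)) k := by
  have hδ0 : δ ≠ 0 := by positivity
  rcases lt_or_ge k 0 with hneg | hk0
  · rw [h.bwdDiff_eq_zero_of_neg hδ0 _ hneg]
  have hkR : (0 : ℝ) ≤ k := by exact_mod_cast hk0
  rcases (by omega : 2 * k + 1 ≤ n ∨ 2 * k = n ∨ 2 * k = n + 2) with hlow | heven | htop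
  · have hkn : 2 * (k : ℝ) + 1 ≤ n := by exact_mod_cast hlow
    refine nonneg_of_mul_nonneg_right ?_ (by linarith : 0 < δ)
    rw [h.bwdDiff_succ]
    linarith [mul_nonneg (by linarith : (0 : ℝ) ≤ k + 1) (hn (k + 1) (by omega)),
      mul_nonneg (by linarith : (0 : ℝ) ≤ δ + n - k + 1) (hn k (by omega)),
      mul_nonneg (by linarith : (0 : ℝ) ≤ δ + k - 1) (hn (k - 1) (by omega)),
      mul_nonneg (by linarith : (0 : ℝ) ≤ n - k + 3) (hn (k - 2) (by omega))]
  · have hkn : 2 * (k : ℝ) = n := by exact_mod_cast heven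
    have hanti := bwdDiff_eq_neg_of_symm (h.symm hδ0 n) (k + 1)
    rw [show (n : ℤ) + 1 - (k + 1) = k by omega] at hanti
    have hs : δ * bwdDiff (c (n + 1)) k = δ * bwdDiff (c n) k
        + (δ + k - 1) * bwdDiff (c n) (k - 1) + (n - k + 3) * bwdDiff (c n) (k - 2) := by
      rw [h.bwdDiff_succ, hanti]
      linear_combination (-bwdDiff (c n) k) * hkn
    refine nonneg_of_mul_nonneg_right ?_ (by linarith : 0 < δ)
    rw [hs]
    linarith [mul_nonneg (by linarith : (0 : ℝ) ≤ δ) (hn k (by omega)),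
      mul_nonneg (by linarith : (0 : ℝ) ≤ δ + k - 1) (hn (k - 1) (by omega)),
      mul_nonneg (by linarith : (0 : ℝ) ≤ n - k + 3) (hn (k - 2) (by omega))]
  · have hanti := bwdDiff_eq_neg_of_symm (h.symm hδ0 (n + 1)) k
    rw [show ((n + 1 : ℕ) : ℤ) + 1 - k = k by omega] at hanti
    linarith

theorem bwdDiff_center_nonneg (h : IsCoeffTable δ c) (hδ : 1 ≤ δ) {m : ℕ} (hm : 2 ≤ m)
    (hU : IncreasesToMiddle (c (2 * m)) (2 * m)) : 0 ≤ bwdDiff (c (2 * m + 2)) (m + 1) := by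
  have hδ0 : δ ≠ 0 := by positivity
  have hmR : (2 : ℝ) ≤ m := by exact_mod_cast hm
  have hc := h.bwdDiff_center hδ0 m
  have h1 := h.bwdDiff_succ (2 * m) m
  have h2 := h.bwdDiff_succ (2 * m) (m - 1)
  rw [show (m : ℤ) - 1 + 1 = m by ring, show (m : ℤ) - 1 - 1 = m - 2 by ring,
    show (m : ℤ) - 1 - 2 = m - 3 by ring] at h2
  have hanti := bwdDiff_eq_neg_of_symm (h.symm hδ0 (2 * m)) (m + 1)
  rw [show ((2 * m : ℕ) : ℤ) + 1 - (m + 1) = m by push_cast; ring] at hanti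
  push_cast at h1 h2
  have key : δ ^ 2 * bwdDiff (c (2 * m + 2)) (m + 1)
      = (δ * (δ - 2) + m * (m + 3)) * bwdDiff (c (2 * m)) m
        + ((δ - 2) * (δ + m - 1) + (m + 3) * (δ + m + 2)) * bwdDiff (c (2 * m)) (m - 1)
        + (m + 3) * (2 * δ + m - 4) * bwdDiff (c (2 * m)) (m - 2)
        + (m + 3) * (m + 4) * bwdDiff (c (2 * m)) (m - 3) := by
    linear_combination δ * hc + (δ - 2) * h1 + (m + 3) * h2 + (δ - 2) * (m + 1) * hanti
  refine nonneg_of_mul_nonneg_right ?_ (by positivity : 0 < δ ^ 2)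
  rw [key]
  linarith [mul_nonneg (by nlinarith : 0 ≤ δ * (δ - 2) + m * (m + 3))
      (hU m (by push_cast; omega)),
    mul_nonneg (by nlinarith : 0 ≤ (δ - 2) * (δ + m - 1) + (m + 3) * (δ + m + 2))
      (hU (m - 1) (by push_cast; omega)),
    mul_nonneg (by nlinarith : (0 : ℝ) ≤ (m + 3) * (2 * δ + m - 4))
      (hU (m - 2) (by push_cast; omega)),
    mul_nonneg (by positivity : (0 : ℝ) ≤ (m + 3) * (m + 4))
      (hU (m - 3) (by push_cast; omega))]

theorem row_three (h : IsCoeffTable δ c) (hδ : δ ≠ 0) :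
    c 3 0 = 1 + 6 / δ + 4 / δ ^ 2 ∧ c 3 1 = 3 + 6 / δ + 4 / δ ^ 2 := by
  have hneg : ∀ n : ℕ, c n (-1) = 0 ∧ c n (-2) = 0 := fun n =>
    ⟨h.eq_zero_of_neg hδ n (by norm_num), h.eq_zero_of_neg hδ n (by norm_num)⟩
  have c10 := h.succ 0 0
  have c11 := h.succ 0 1
  have c20 := h.succ 1 0
  have c21 := h.succ 1 1
  have c30 := h.succ 2 0
  have c31 := h.succ 2 1
  have c12 : c 1 2 = 0 := by rw [h.symm hδ]; exact (hneg 1).1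
  have c22 : c 2 2 = c 2 0 := by rw [h.symm hδ]; norm_num
  norm_num [h.zero, hneg, c12, c22] at c10 c11 c20 c21 c30 c31
  have e10 : c 1 0 = 1 := mul_left_cancel₀ hδ (c10.trans (mul_one δ).symm)
  have e11 : c 1 1 = 1 := mul_left_cancel₀ hδ (c11.trans (mul_one δ).symm)
  rw [e10, e11] at c20 c21
  have e20 : c 2 0 = 1 + 2 / δ := by field_simp; linarith
  have e21 : c 2 1 = 2 := mul_left_cancel₀ hδ (by linarith)
  rw [e20, e21] at c30 c31
  field_simp at c30 c31 ⊢
  constructor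
  · linear_combination c30
  · linear_combination c31

theorem increasesToMiddle_three (h : IsCoeffTable δ c) (hδ : 0 < δ) :
    IncreasesToMiddle (c 3) 3 := by
  obtain ⟨c30, c31⟩ := h.row_three hδ.ne'
  intro k hk
  rcases (by push_cast at hk; omega : k < 0 ∨ k = 0 ∨ k = 1 ∨ k = 2) with hneg | rfl | rfl | rfl
  · rw [h.bwdDiff_eq_zero_of_neg hδ.ne' _ hneg]
  · rw [bwdDiff, c30, h.eq_zero_of_neg hδ.ne' 3 (by norm_num), sub_zero]
    positivity
  · rw [bwdDiff, show (1 : ℤ) - 1 = 0 by norm_num, c30, c31]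
    norm_num
  · have hanti := bwdDiff_eq_neg_of_symm (h.symm hδ.ne' 3) 2
    norm_num at hanti
    linarith

theorem bwdDiff_four_two_nonneg (h : IsCoeffTable δ c) (hδ : 0 < δ) : 0 ≤ bwdDiff (c 4) 2 := by
  obtain ⟨c30, c31⟩ := h.row_three hδ.ne'
  have hc := h.bwdDiff_center hδ.ne' 1
  norm_num [bwdDiff, c30, c31, h.eq_zero_of_neg hδ.ne' 3 (show (-1 : ℤ) < 0 by norm_num)] at hc
  refine nonneg_of_mul_nonneg_right ?_ hδ
  rw [bwdDiff, show (2 : ℤ) - 1 = 1 by norm_num, hc]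
  have : 0 ≤ 6 / δ + 4 / δ ^ 2 := by positivity
  linarith

theorem increasesToMiddle (h : IsCoeffTable δ c) (hδ : 1 ≤ δ) {n : ℕ} (hn : 3 ≤ n) :
    IncreasesToMiddle (c n) n := by
  have hδ0 : 0 < δ := by linarith
  suffices ∀ n ≥ 3, IncreasesToMiddle (c n) n ∧ IncreasesToMiddle (c (n + 1)) (n + 1) from
    (this n hn).1
  intro n hn
  induction n, hn using Nat.le_induction with
  | base =>
    have h3 := h.increasesToMiddle_three hδ0
    refine ⟨h3, fun k hk => ?_⟩
    rcases eq_or_ne (2 * k) (3 + 1) with hmid | hmid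
    · obtain rfl : k = 2 := by omega
      exact h.bwdDiff_four_two_nonneg hδ0
    · exact h.bwdDiff_succ_nonneg hδ h3 (by push_cast at hk ⊢; omega) hmid
  | succ n hn ih =>
    refine ⟨ih.2, fun k hk => ?_⟩
    rcases eq_or_ne (2 * k) ((n + 1 : ℕ) + 1) with hmid | hmid
    · obtain ⟨m, rfl⟩ : ∃ m, n = 2 * m := ⟨n / 2, by omega⟩
      obtain rfl : k = m + 1 := by push_cast at hmid; omega
      exact h.bwdDiff_center_nonneg hδ (by omega) ih.1
    · exact h.bwdDiff_succ_nonneg hδ ih.2 (by push_cast at hk ⊢; omega) hmid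

end IsCoeffTable

theorem isCoeffTable_coeffZ {δ : ℝ} (hδ : δ ≠ 0) {P : ℕ → ℝ[X]} (hP0 : P 0 = 1)
    (hrec : ∀ n : ℕ, P (n + 1) =
      (C ((n : ℝ) / δ) * X ^ 2 + X + C (1 + (n : ℝ) / δ)) * P n
        + C (1 / δ) * (1 - X) * (1 + X ^ 2) * derivative (P n)) :
    IsCoeffTable δ (fun n => coeffZ (P n)) where
  zero k := by rw [hP0, coeffZ_one]
  succ n k := by
    have hinv : C δ * C (1 / δ) = 1 := by rw [← C_mul, mul_one_div_cancel hδ, C_1]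
    have hdiv : C ((n : ℝ) / δ) = C (n : ℝ) * C (1 / δ) := by rw [← C_mul, mul_one_div]
    have hpoly : C δ * P (n + 1) = C (n : ℝ) * (X * (X * P n)) + C δ * (X * P n)
        + C (δ + n) * P n + (derivative (P n) - X * derivative (P n)
          + X * (X * derivative (P n)) - X * (X * (X * derivative (P n)))) := by
      rw [hrec n, C_add, C_1, hdiv, C_add]
      linear_combination (C (n : ℝ) * X ^ 2 * P n + C (n : ℝ) * P n
        + (1 - X) * (1 + X ^ 2) * derivative (P n)) * hinv
    have := congrArg (coeffZ · k) hpoly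
    simp only [coeffZ_add, coeffZ_sub, coeffZ_C_mul, coeffZ_X_mul, coeffZ_derivative,
      sub_add_cancel] at this
    rw [show k - 1 - 1 = k - 2 by ring] at this
    push_cast at this
    linear_combination this

theorem unimodal_of_symm {p : ℝ[X]} {n : ℕ} (hsymm : ∀ k, coeffZ p k = coeffZ p (n - k))
    (hinc : IncreasesToMiddle (coeffZ p) n) : Unimodal p := by
  refine ⟨(n + 1) / 2, fun i hi => ?_, fun i hi _ => ?_⟩
  · have := hinc (i + 1) (by omega)
    rw [bwdDiff, add_sub_cancel_right, ← Nat.cast_succ, coeffZ_natCast, coeffZ_natCast] at this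
    linarith
  · have := hinc (n - i) (by omega)
    rw [bwdDiff, ← hsymm, show (n : ℤ) - i - 1 = n - (i + 1 : ℕ) by push_cast; ring, ← hsymm,
      coeffZ_natCast, coeffZ_natCast] at this
    linarith

theorem stmt_14 (δ : ℕ) (hδ : 0 < δ) (P : ℕ → Polynomial ℝ)
    (hP0 : P 0 = 1)
    (hrec : ∀ n : ℕ, P (n + 1) =
      (C ((n : ℝ) / (δ : ℝ)) * X ^ 2 + X + C (1 + (n : ℝ) / (δ : ℝ))) * P n
        + C (1 / (δ : ℝ)) * (1 - X) * (1 + X ^ 2) * derivative (P n)) :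
    ∀ n : ℕ, 3 ≤ n → Unimodal (P n) := by
  have hδ1 : (1 : ℝ) ≤ δ := by exact_mod_cast hδ
  have hT := isCoeffTable_coeffZ (by positivity) hP0 hrec
  intro n hn
  exact unimodal_of_symm (hT.symm (by positivity) n) (hT.increasesToMiddle hδ1 hn)
end

section
/- Let (Â_n)_{n≥1} be the alternating Eulerian polynomials of type A, defined by Â_1(x) = 1 and 2Â_{n+1}(x) = ((n − 1)x² + 2x + n + 1)·Â_n(x) + (1 − x)(1 + x²)·Â_n′(x) for n ≥ 1, and let (B̂_n)_{n≥0} be the alternating Eulerian polynomials of type B, defined by B̂_0(x) = 1 and B̂_{n+1}(x) = (nx² + x + n + 1)·B̂_n(x) + (1 − x)(1 + x²)·B̂_n′(x) for n ≥ 0. Then for every n ∈ ℕ: 2^n · Â_{n+1}(x) = Σ_{k=0}^{n} C(n,k) · B̂_k(x) · B̂_{n−k}(x). -/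
/-!
Let `D = (1 - X)(1 + X²) d/dX`, a derivation of `ℝ[X]`, and `u = 1 + X²`, `v = 1 + X`. The type B
recurrence reads `B̂ₖ₊₁ = (k u + v) B̂ₖ + D B̂ₖ`, and the type A recurrence at index `n + 1` reads
`2 Â_{n+2} = (n u + 2v) Â_{n+1} + D Â_{n+1}`. Pascal's rule and the Leibniz rule for `D` show that
the binomial self-convolution `Sₙ = ∑ C(n,k) B̂ₖ B̂ₙ₋ₖ` satisfies `Sₙ₊₁ = (n u + 2v) Sₙ + D Sₙ`,
the type A recurrence without the factor `2`; hence `2ⁿ Â_{n+1} = Sₙ` by induction.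
-/

open Polynomial Finset

section BinomialConvolution

variable {S R : Type*} [CommSemiring S] [CommSemiring R] [Algebra S R]

def binomialConvolution (B : ℕ → R) (n : ℕ) : R :=
  ∑ k ∈ range (n + 1), (n.choose k : R) * B k * B (n - k)

theorem binomialConvolution_succ (D : Derivation S R R) (u v : R) (B : ℕ → R)
    (hB : ∀ k : ℕ, B (k + 1) = (k * u + v) * B k + D (B k)) (n : ℕ) :
    binomialConvolution B (n + 1) =
      (n * u + 2 * v) * binomialConvolution B n + D (binomialConvolution B n) := by
  simp only [binomialConvolution, mul_assoc]
  rw [sum_choose_succ_mul (fun i j => B i * B j), ← sum_add_distrib, map_sum, mul_sum,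
    ← sum_add_distrib]
  refine sum_congr rfl fun k hk => ?_
  obtain ⟨m, rfl⟩ : ∃ m, n = k + m := ⟨n - k, by have := mem_range.mp hk; omega⟩
  rw [show k + m + 1 - k = m + 1 by omega, Nat.add_sub_cancel_left, hB k, hB m,
    Derivation.leibniz, Derivation.leibniz, Derivation.map_natCast]
  simp only [smul_eq_mul, Nat.cast_add]
  ring

theorem two_pow_smul_eq_binomialConvolution (D : Derivation S R R) (u v : R) (A B : ℕ → R)
    (hA1 : A 1 = 1) (hB0 : B 0 = 1)
    (hA : ∀ n : ℕ, 2 * A (n + 2) = (n * u + 2 * v) * A (n + 1) + D (A (n + 1)))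
    (hB : ∀ k : ℕ, B (k + 1) = (k * u + v) * B k + D (B k)) (n : ℕ) :
    (2 : S) ^ n • A (n + 1) = binomialConvolution B n := by
  induction n with
  | zero => simp [binomialConvolution, hA1, hB0]
  | succ n ih =>
    rw [binomialConvolution_succ D u v B hB, ← ih, D.map_smul, mul_smul_comm, ← smul_add,
      ← hA, pow_succ, mul_smul, two_smul, two_mul]

end BinomialConvolution

theorem stmt_15 (A B : ℕ → Polynomial ℝ)
    (hA1 : A 1 = 1)
    (hArec : ∀ n : ℕ, 1 ≤ n → 2 * A (n + 1) =
      (C ((n : ℝ) - 1) * X ^ 2 + 2 * X + C ((n : ℝ) + 1)) * A n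
        + (1 - X) * (1 + X ^ 2) * derivative (A n))
    (hB0 : B 0 = 1)
    (hBrec : ∀ n : ℕ, B (n + 1) =
      (C (n : ℝ) * X ^ 2 + X + C ((n : ℝ) + 1)) * B n
        + (1 - X) * (1 + X ^ 2) * derivative (B n)) :
    ∀ n : ℕ, (2 : ℝ) ^ n • A (n + 1) =
      ∑ k ∈ Finset.range (n + 1), C ((n.choose k : ℕ) : ℝ) * B k * B (n - k) := by
  set D : Derivation ℝ ℝ[X] ℝ[X] := ((1 - X) * (1 + X ^ 2) : ℝ[X]) • derivative'
  have hD : ∀ P, D P = (1 - X) * (1 + X ^ 2) * derivative P := fun _ => rfl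
  have hA : ∀ n : ℕ, 2 * A (n + 2) =
      ((n : ℝ[X]) * (1 + X ^ 2) + 2 * (1 + X)) * A (n + 1) + D (A (n + 1)) := by
    intro n
    rw [hArec (n + 1) (by omega), hD]
    simp only [C_add, C_sub, map_natCast, C_1, Nat.cast_succ]
    ring
  have hB : ∀ k : ℕ, B (k + 1) = ((k : ℝ[X]) * (1 + X ^ 2) + (1 + X)) * B k + D (B k) := by
    intro k
    rw [hBrec k, hD]
    simp only [C_add, map_natCast, C_1]
    ring
  intro n
  simpa only [binomialConvolution, map_natCast] using
    two_pow_smul_eq_binomialConvolution D _ _ A B hA1 hB0 hA hB n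
end

section
/- Let (M̃_n)_{n≥0} be defined by M̃_0(x) = 1 and M̃_n(x) = (2n − 1)x·M̃_{n−1}(x) + 2x(1 − x)·M̃_{n−1}′(x) for n ≥ 1, and let (M_n)_{n≥1} be defined by M_1(x) = 1 and M_n(x) = ((2n − 2)x + 1)·M_{n−1}(x) + 2x(1 − x)·M_{n−1}′(x) for n ≥ 2. Then for every n ≥ 1, M̃_n is alternatingly increasing with respect to n (where deg M̃_n = n) and M_n is alternatingly increasing with respect to n − 1 (where deg M_n = n − 1). -/
open Polynomial

/-!
The operator `q ↦ (aX + b) q + 2X(1 - X) q'` acts on coefficients by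
`c_{k+1} = (2k + 2 + b) q_{k+1} + (a - 2k) q_k`. For `a = 2n + 2`, `b = 1` each coefficient of
`M_{n+2}` is a positive combination of two neighbouring coefficients of `M_{n+1}`, and comparing
these combinations pairwise shows that the alternating order of `M_{n+1}` (w.r.t. `n`) is inherited
by `M_{n+2}` (w.r.t. `n + 1`). The left-peak polynomials are the shifted reversals
`M̃_{n+1} = X · X^n M_{n+1}(1/X)`; the alternating chain of such a reversal is `0` followed by the
alternating chain of `M_{n+1}`.
-/

/-- A real polynomial `p` is alternatingly increasing with respect to `n` if
`0 ≤ p₀ ≤ pₙ ≤ p₁ ≤ p_{n-1} ≤ p₂ ≤ ⋯ ≤ p_{⌊(n+1)/2⌋}`. -/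
def AltIncreasing (p : Polynomial ℝ) (n : ℕ) : Prop :=
  0 ≤ p.coeff 0 ∧ (∀ i : ℕ, 2 * i < n → p.coeff i ≤ p.coeff (n - i)) ∧
    (∀ i : ℕ, 2 * i + 1 ≤ n → p.coeff (n - i) ≤ p.coeff (i + 1))

noncomputable def peakOp (a b : ℝ) (q : ℝ[X]) : ℝ[X] :=
  (C a * X + C b) * q + 2 * X * (1 - X) * derivative q

section peakOp

variable (a b : ℝ) (q : ℝ[X])

lemma coeff_peakOp_zero : (peakOp a b q).coeff 0 = b * q.coeff 0 := by
  simp [peakOp, mul_coeff_zero]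

lemma coeff_peakOp_succ (k : ℕ) :
    (peakOp a b q).coeff (k + 1) = (2 * k + 2 + b) * q.coeff (k + 1) + (a - 2 * k) * q.coeff k := by
  have h : peakOp a b q = C a * (X * q) + C b * q + C 2 * (X * derivative q)
      - C 2 * (X * (X * derivative q)) := by
    simp only [peakOp, map_ofNat]; ring
  rw [h]
  cases k <;> simp [coeff_X_mul, coeff_derivative, mul_coeff_zero] <;> ring

lemma natDegree_peakOp_le {n : ℕ} (hq : q.natDegree ≤ n) : (peakOp a b q).natDegree ≤ n + 1 := by
  rw [natDegree_le_iff_coeff_eq_zero] at hq ⊢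
  intro k hk
  obtain ⟨k, rfl⟩ := Nat.exists_eq_add_one.2 (by omega : 0 < k)
  rw [coeff_peakOp_succ, hq _ (by omega), hq _ (by omega)]
  ring

private lemma coeff_peakOp_succ' (n k : ℕ) :
    (peakOp (2 * n + 2) 1 q).coeff (k + 1)
      = (2 * k + 3) * q.coeff (k + 1) + (2 * n + 2 - 2 * k) * q.coeff k := by
  rw [coeff_peakOp_succ]; ring

end peakOp

namespace AltIncreasing

variable {p q : ℝ[X]} {n : ℕ}

lemma coeff_zero_le (h : AltIncreasing p n) : p.coeff 0 ≤ p.coeff n := by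
  rcases n.eq_zero_or_pos with rfl | hn
  · rfl
  · simpa using h.2.1 0 hn

lemma coeff_le_coeff_succ (h : AltIncreasing p n) {i : ℕ} (hi : 2 * i + 1 ≤ n) :
    p.coeff i ≤ p.coeff (i + 1) :=
  (h.2.1 i (by omega)).trans (h.2.2 i hi)

lemma coeff_nonneg (h : AltIncreasing p n) (hp : p.natDegree ≤ n) (j : ℕ) : 0 ≤ p.coeff j := by
  have lower : ∀ j, 2 * j ≤ n + 1 → 0 ≤ p.coeff j := by
    intro j hj
    induction j with
    | zero => exact h.1
    | succ k ih => exact (ih (by omega)).trans (h.coeff_le_coeff_succ (by omega))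
  by_cases hj : 2 * j ≤ n + 1
  · exact lower j hj
  by_cases hjn : n < j
  · rw [coeff_eq_zero_of_natDegree_lt (by omega)]
  · calc 0 ≤ p.coeff (n - j) := lower _ (by omega)
      _ ≤ p.coeff (n - (n - j)) := h.2.1 _ (by omega)
      _ = p.coeff j := by rw [Nat.sub_sub_self (by omega)]

lemma coeff_peakOp_le (hq : AltIncreasing q n) (hdeg : q.natDegree ≤ n) {i : ℕ}
    (hi : 2 * i < n + 1) :
    (peakOp (2 * n + 2) 1 q).coeff i ≤ (peakOp (2 * n + 2) 1 q).coeff (n + 1 - i) := by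
  rcases i with _ | j
  · rw [Nat.sub_zero, coeff_peakOp_zero, coeff_peakOp_succ',
      coeff_eq_zero_of_natDegree_lt (by omega : q.natDegree < n + 1)]
    linarith [hq.coeff_zero_le, hq.coeff_nonneg hdeg n]
  obtain ⟨t, rfl⟩ : ∃ t, n = j + 1 + t := ⟨n - j - 1, by omega⟩
  rw [show j + 1 + t + 1 - (j + 1) = t + 1 by omega, coeff_peakOp_succ', coeff_peakOp_succ']
  have f1 : q.coeff j ≤ q.coeff (t + 1) := (hq.2.1 j (by omega)).trans_eq (by congr 1; omega)
  have f2 : q.coeff (j + 1) ≤ q.coeff t := by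
    rcases (by omega : 2 * (j + 1) < j + 1 + t ∨ t = j + 1) with h | rfl
    · exact (hq.2.1 (j + 1) h).trans_eq (by congr 1; omega)
    · rfl
  have f3 : q.coeff j ≤ q.coeff (j + 1) := hq.coeff_le_coeff_succ (by omega)
  push_cast
  nlinarith [mul_le_mul_of_nonneg_left f1 (by positivity : (0 : ℝ) ≤ 2 * t + 3),
    mul_le_mul_of_nonneg_left f2 (by positivity : (0 : ℝ) ≤ 2 * j + 3)]

lemma coeff_peakOp_sub_le (hq : AltIncreasing q n) (hdeg : q.natDegree ≤ n) {i : ℕ}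
    (hi : 2 * i + 1 ≤ n + 1) :
    (peakOp (2 * n + 2) 1 q).coeff (n + 1 - i) ≤ (peakOp (2 * n + 2) 1 q).coeff (i + 1) := by
  rcases (by omega : 2 * i = n ∨ 2 * i + 1 ≤ n) with h | hi
  · rw [show n + 1 - i = i + 1 by omega]
  obtain ⟨s, rfl⟩ : ∃ s, n = i + s := ⟨n - i, by omega⟩
  rw [show i + s + 1 - i = s + 1 by omega, coeff_peakOp_succ', coeff_peakOp_succ']
  have g1 : q.coeff s ≤ q.coeff (i + 1) := (hq.2.2 i hi).trans_eq' (by congr 1; omega)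
  have g2 : q.coeff (s + 1) ≤ q.coeff i := by
    rcases i with _ | i
    · rw [coeff_eq_zero_of_natDegree_lt (by omega)]
      exact hq.1
    · exact (hq.2.2 i (by omega)).trans_eq' (by congr 1; omega)
  have g3 : q.coeff i ≤ q.coeff (i + 1) := hq.coeff_le_coeff_succ hi
  push_cast
  nlinarith [mul_le_mul_of_nonneg_left g1 (by positivity : (0 : ℝ) ≤ 2 * i + 2),
    mul_le_mul_of_nonneg_left g2 (by positivity : (0 : ℝ) ≤ 2 * s + 2)]

lemma peakOp (hq : AltIncreasing q n) (hdeg : q.natDegree ≤ n) :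
    AltIncreasing (peakOp (2 * n + 2) 1 q) (n + 1) :=
  ⟨by simpa [coeff_peakOp_zero] using hq.1, fun _ hi => hq.coeff_peakOp_le hdeg hi,
    fun _ hi => hq.coeff_peakOp_sub_le hdeg hi⟩

end AltIncreasing

lemma coeff_X_mul_reflect_succ (p : ℝ[X]) {n k : ℕ} (hk : k ≤ n) :
    (X * p.reflect n).coeff (k + 1) = p.coeff (n - k) := by
  rw [coeff_X_mul, coeff_reflect, revAt_le hk]

lemma AltIncreasing.X_mul_reflect {p : ℝ[X]} {n : ℕ} (h : AltIncreasing p n) :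
    AltIncreasing (X * p.reflect n) (n + 1) := by
  refine ⟨by simp, fun i hi => ?_, fun i hi => ?_⟩
  · rcases i with _ | j
    · rw [Nat.sub_zero, coeff_X_mul_zero, coeff_X_mul_reflect_succ _ le_rfl, Nat.sub_self]
      exact h.1
    · rw [coeff_X_mul_reflect_succ _ (by omega), show n + 1 - (j + 1) = (n - j - 1) + 1 by omega,
        coeff_X_mul_reflect_succ _ (by omega), show n - (n - j - 1) = j + 1 by omega]
      exact h.2.2 j (by omega)
  · rw [show n + 1 - i = (n - i) + 1 by omega, coeff_X_mul_reflect_succ _ (by omega),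
      coeff_X_mul_reflect_succ _ (by omega), Nat.sub_sub_self (by omega)]
    rcases (by omega : 2 * i < n ∨ 2 * i = n) with h' | h'
    · exact h.2.1 i h'
    · rw [show n - i = i by omega]

lemma X_mul_reflect_peakOp {q : ℝ[X]} {n : ℕ} (hq : q.natDegree ≤ n) :
    X * (peakOp (2 * n + 2) 1 q).reflect (n + 1) = peakOp (2 * n + 3) 0 (X * q.reflect n) := by
  have hq' : ∀ i, n < i → q.coeff i = 0 := fun i hi => coeff_eq_zero_of_natDegree_lt (by omega)
  ext k
  rcases k with _ | k
  · simp [coeff_peakOp_zero]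
  rw [coeff_peakOp_succ]
  rcases (by omega : k = 0 ∨ 0 < k ∧ k ≤ n ∨ k = n + 1 ∨ n + 1 < k)
    with rfl | ⟨hk0, hkn⟩ | rfl | hk
  · rw [coeff_X_mul_reflect_succ _ (by omega), coeff_X_mul_reflect_succ _ (by omega),
      coeff_X_mul_zero, Nat.sub_zero, Nat.sub_zero, coeff_peakOp_succ', hq' _ (by omega)]
    ring
  · obtain ⟨j, m, rfl, rfl⟩ : ∃ j m, k = j + 1 ∧ n = j + 1 + m := ⟨k - 1, n - k, by omega, by omega⟩
    rw [coeff_X_mul_reflect_succ _ (by omega), show j + 1 + m + 1 - (j + 1) = m + 1 by omega,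
      coeff_peakOp_succ', coeff_X_mul_reflect_succ _ (by omega),
      coeff_X_mul_reflect_succ _ (by omega), show j + 1 + m - (j + 1) = m by omega,
      show j + 1 + m - j = m + 1 by omega]
    push_cast
    ring
  · rw [coeff_X_mul_reflect_succ _ le_rfl, Nat.sub_self, coeff_peakOp_zero, coeff_X_mul,
      coeff_reflect, revAt_eq_self_of_lt (by omega), hq' (n + 1) (by omega),
      coeff_X_mul_reflect_succ _ le_rfl, Nat.sub_self]
    push_cast
    ring
  · obtain ⟨j, rfl⟩ : ∃ j, k = j + 1 := ⟨k - 1, by omega⟩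
    rw [coeff_X_mul, coeff_reflect, revAt_eq_self_of_lt hk,
      coeff_eq_zero_of_natDegree_lt ((natDegree_peakOp_le _ _ _ hq).trans_lt hk),
      coeff_X_mul, coeff_reflect, revAt_eq_self_of_lt (by omega), coeff_X_mul, coeff_reflect,
      revAt_eq_self_of_lt (by omega), hq' (j + 1) (by omega), hq' j (by omega)]
    ring

lemma natDegree_X_mul_reflect {p : ℝ[X]} {n : ℕ} (hp : p.natDegree ≤ n) (h0 : p.coeff 0 ≠ 0) :
    (X * p.reflect n).natDegree = n + 1 := by
  refine natDegree_eq_of_le_of_coeff_ne_zero ?_ ?_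
  · calc (X * p.reflect n).natDegree ≤ 1 + (p.reflect n).natDegree :=
          natDegree_mul_le.trans (by rw [natDegree_X])
      _ ≤ n + 1 := by have := natDegree_reflect_le (N := n) (p := p); omega
  · rwa [coeff_X_mul_reflect_succ _ le_rfl, Nat.sub_self]

structure IsInteriorPeakSeq (M : ℕ → ℝ[X]) : Prop where
  one : M 1 = 1
  succ : ∀ n : ℕ, M (n + 2) = peakOp (2 * n + 2) 1 (M (n + 1))

namespace IsInteriorPeakSeq

variable {M : ℕ → ℝ[X]}

lemma natDegree_le (hM : IsInteriorPeakSeq M) (n : ℕ) : (M (n + 1)).natDegree ≤ n := by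
  induction n with
  | zero => simp [hM.one]
  | succ n ih => rw [hM.succ]; exact natDegree_peakOp_le _ _ _ ih

lemma coeff_zero (hM : IsInteriorPeakSeq M) (n : ℕ) : (M (n + 1)).coeff 0 = 1 := by
  induction n with
  | zero => simp [hM.one]
  | succ n ih => rw [hM.succ, coeff_peakOp_zero, ih, one_mul]

lemma altIncreasing (hM : IsInteriorPeakSeq M) (n : ℕ) : AltIncreasing (M (n + 1)) n := by
  induction n with
  | zero => exact ⟨by simp [hM.one], fun _ h => by omega, fun _ h => by omega⟩
  | succ n ih => rw [hM.succ]; exact ih.peakOp (hM.natDegree_le n)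

lemma natDegree (hM : IsInteriorPeakSeq M) (n : ℕ) : (M (n + 1)).natDegree = n := by
  refine natDegree_eq_of_le_of_coeff_ne_zero (hM.natDegree_le n) ?_
  have := (hM.altIncreasing n).coeff_zero_le
  rw [hM.coeff_zero] at this
  linarith

lemma eq_X_mul_reflect (hM : IsInteriorPeakSeq M) {Mt : ℕ → ℝ[X]} (hMt0 : Mt 0 = 1)
    (hMt : ∀ n : ℕ, Mt (n + 1) = peakOp (2 * n + 1) 0 (Mt n)) (n : ℕ) :
    Mt (n + 1) = X * (M (n + 1)).reflect n := by
  induction n with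
  | zero => simp [hMt, hMt0, hM.one, peakOp]
  | succ n ih =>
    rw [hMt, ih, hM.succ, X_mul_reflect_peakOp (hM.natDegree_le n)]
    congr 1
    push_cast
    ring

end IsInteriorPeakSeq

theorem stmt_19 (Mt M : ℕ → Polynomial ℝ)
    (hMt0 : Mt 0 = 1)
    (hMtrec : ∀ n : ℕ, 1 ≤ n → Mt n =
      C (2 * (n : ℝ) - 1) * X * Mt (n - 1)
        + 2 * X * (1 - X) * derivative (Mt (n - 1)))
    (hM1 : M 1 = 1)
    (hMrec : ∀ n : ℕ, 2 ≤ n → M n =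
      (C (2 * (n : ℝ) - 2) * X + 1) * M (n - 1)
        + 2 * X * (1 - X) * derivative (M (n - 1))) :
    ∀ n : ℕ, 1 ≤ n →
      (Mt n).natDegree = n ∧ AltIncreasing (Mt n) n ∧
      (M n).natDegree = n - 1 ∧ AltIncreasing (M n) (n - 1) := by
  have hM : IsInteriorPeakSeq M := ⟨hM1, fun n => by
    rw [hMrec (n + 2) (by omega), peakOp, map_one]
    congr 5
    push_cast
    ring⟩
  have hMt : ∀ n : ℕ, Mt (n + 1) = peakOp (2 * n + 1) 0 (Mt n) := fun n => by
    rw [hMtrec (n + 1) (by omega), peakOp, map_zero, add_zero, Nat.add_sub_cancel]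
    congr 4
    push_cast
    ring
  intro n hn
  obtain ⟨m, rfl⟩ := Nat.exists_eq_add_of_le' hn
  rw [Nat.add_sub_cancel, hM.eq_X_mul_reflect hMt0 hMt m]
  exact ⟨natDegree_X_mul_reflect (hM.natDegree_le m) (by simp [hM.coeff_zero]),
    (hM.altIncreasing m).X_mul_reflect, hM.natDegree m, hM.altIncreasing m⟩
end
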